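/- arXiv:1805.07564 — 4 statements merged into one kernel-verified Lean document; each statement's English description precedes it below -/
import Mathlib

section
/- For every prime number n ≥ 3 there exist a proper edge-colouring of the complete graph K_n using n colours and a partition of the edge set of K_n into (n−1)/2 rainbow Hamiltonian cycles. -/
/-!
Identify the vertices of `K_p` with `ZMod p` and colour the edge `{i, j}` by `i + j`; two edges
at a common vertex `v` with the same colour have the same other endpoint, so the colouring is
proper. For `d = 1, …, (p - 1) / 2` the translation `i ↦ i + d` is a single `p`-cycle because
`p` is prime, and along it the colours `2 i + d` are distinct because `p` is odd. The edge
`{a, b}` lies on the translation cycle of `d` exactly when `d = ±(b - a)`, and exactly one of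
`b - a` and `a - b` has a representative in `1, …, (p - 1) / 2`.
-/

section SumColouring

variable {R : Type*}

def sumColouring [AddCommMagma R] : Sym2 R → R :=
  Sym2.lift ⟨(· + ·), add_comm⟩

@[simp]
lemma sumColouring_mk [AddCommMagma R] (i j : R) : sumColouring s(i, j) = i + j := rfl

lemma sumColouring_injOn_incident [AddCancelCommMonoid R] {e f : Sym2 R} {v : R}
    (he : v ∈ e) (hf : v ∈ f) (h : sumColouring e = sumColouring f) : e = f := by
  obtain ⟨x, rfl⟩ := Sym2.mem_iff_exists.mp he
  obtain ⟨y, rfl⟩ := Sym2.mem_iff_exists.mp hf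
  rw [sumColouring_mk, sumColouring_mk] at h
  rw [add_left_cancel h]

lemma sumColouring_add_injective [Ring R] [NoZeroDivisors R] (h2 : (2 : R) ≠ 0) (d : R) :
    Function.Injective fun i => sumColouring s(i, i + d) := by
  intro i j h
  simp only [sumColouring_mk, ← add_assoc] at h
  exact mul_left_cancel₀ h2 (by rw [two_mul, two_mul]; exact add_right_cancel h)

end SumColouring

section Translation

variable {G : Type*} [AddGroup G]

lemma Equiv.isCycle_addRight {d : G} (hd : d ≠ 0) (hgen : AddSubgroup.zmultiples d = ⊤) :
    (Equiv.addRight d).IsCycle := by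
  refine ⟨0, by simpa using hd, fun y _ => ?_⟩
  obtain ⟨k, rfl⟩ := AddSubgroup.mem_zmultiples_iff.mp (hgen ▸ AddSubgroup.mem_top y)
  exact ⟨k, by simp⟩

lemma Equiv.support_addRight [Fintype G] [DecidableEq G] {d : G} (hd : d ≠ 0) :
    (Equiv.addRight d).support = Finset.univ :=
  Finset.eq_univ_of_forall fun x => by simpa using hd

end Translation

lemma Sym2.exists_mk_add_eq_mk_iff {G : Type*} [AddCommGroup G] {d a b : G} :
    (∃ i, s(i, i + d) = s(a, b)) ↔ d = b - a ∨ d = -(b - a) := by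
  constructor
  · rintro ⟨i, h⟩
    rcases Sym2.eq_iff.mp h with ⟨rfl, rfl⟩ | ⟨rfl, rfl⟩
    · left; abel
    · right; abel
  · rintro (rfl | rfl)
    · exact ⟨a, by rw [add_sub_cancel]⟩
    · exact ⟨b, by rw [Sym2.eq_swap, neg_sub, add_sub_cancel]⟩

namespace ZMod

variable {p : ℕ}

lemma natCast_succ_ne_zero {m : ℕ} (k : Fin m) (hm : m < p) : ((k + 1 : ℕ) : ZMod p) ≠ 0 := by
  rw [Ne, natCast_eq_zero_iff]
  exact Nat.not_dvd_of_pos_of_lt k.val.succ_pos (by omega)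

lemma natCast_succ_eq_or_eq_neg_injective (hp : Odd p) {k k' : Fin ((p - 1) / 2)}
    (h : ((k + 1 : ℕ) : ZMod p) = (k' + 1 : ℕ) ∨ ((k + 1 : ℕ) : ZMod p) = -(k' + 1 : ℕ)) :
    k = k' := by
  obtain ⟨r, rfl⟩ := hp
  have hk := k.isLt
  have hk' := k'.isLt
  rcases h with h | h
  · rw [natCast_eq_natCast_iff', Nat.mod_eq_of_lt (by omega), Nat.mod_eq_of_lt (by omega)] at h
    exact Fin.ext (by omega)
  · rw [eq_neg_iff_add_eq_zero, ← Nat.cast_add, natCast_eq_zero_iff] at h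
    exact absurd (Nat.le_of_dvd (by omega) h) (by omega)

lemma exists_natCast_succ_eq_or_eq_neg (hp : Odd p) {x : ZMod p} (hx : x ≠ 0) :
    ∃ k : Fin ((p - 1) / 2), ((k + 1 : ℕ) : ZMod p) = x ∨ ((k + 1 : ℕ) : ZMod p) = -x := by
  have : NeZero p := ⟨by rintro rfl; simp at hp⟩
  have hhalf : p / 2 = (p - 1) / 2 := by obtain ⟨r, rfl⟩ := hp; omega
  have hpos : 0 < x.valMinAbs.natAbs := by simpa [Int.natAbs_pos, valMinAbs_eq_zero] using hx
  refine ⟨⟨x.valMinAbs.natAbs - 1, by have := natAbs_valMinAbs_le x; omega⟩, ?_⟩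
  simp only [Nat.sub_add_cancel hpos, natCast_natAbs_valMinAbs]
  split_ifs <;> simp

lemma existsUnique_natCast_succ_eq_or_eq_neg (hp : Odd p) {x : ZMod p} (hx : x ≠ 0) :
    ∃! k : Fin ((p - 1) / 2), ((k + 1 : ℕ) : ZMod p) = x ∨ ((k + 1 : ℕ) : ZMod p) = -x := by
  obtain ⟨k₀, hk₀⟩ := exists_natCast_succ_eq_or_eq_neg hp hx
  refine ⟨k₀, hk₀, fun k hk => natCast_succ_eq_or_eq_neg_injective hp ?_⟩
  rcases hk with hk | hk <;> rcases hk₀ with hk₀ | hk₀ <;> simp [hk, hk₀]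

theorem exists_properColouring_rainbowCycle_decomposition (p : ℕ) [Fact p.Prime] (hp : p ≠ 2) :
    ∃ (c : Sym2 (ZMod p) → ZMod p) (σ : Fin ((p - 1) / 2) → Equiv.Perm (ZMod p)),
      (∀ e f : Sym2 (ZMod p), ¬e.IsDiag → ¬f.IsDiag → e ≠ f →
        (∃ v, v ∈ e ∧ v ∈ f) → c e ≠ c f) ∧
      (∀ k, (σ k).IsCycle ∧ (σ k).support = Finset.univ) ∧
      (∀ k, Function.Injective (fun i => c s(i, σ k i))) ∧
      (∀ e : Sym2 (ZMod p), ¬e.IsDiag → ∃! k, ∃ i, s(i, σ k i) = e) := by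
  have hodd : Odd p := (Fact.out : p.Prime).odd_of_ne_two hp
  have hd (k : Fin ((p - 1) / 2)) : ((k + 1 : ℕ) : ZMod p) ≠ 0 :=
    natCast_succ_ne_zero k (by have := hodd.pos; omega)
  refine ⟨sumColouring, fun k => Equiv.addRight ((k + 1 : ℕ) : ZMod p), ?_,
    fun k => ⟨?_, Equiv.support_addRight (hd k)⟩, fun k => ?_, ?_⟩
  · rintro e f - - hne ⟨v, hve, hvf⟩ h
    exact hne (sumColouring_injOn_incident hve hvf h)
  · exact Equiv.isCycle_addRight (hd k)
      (zmultiples_eq_top_of_prime_card (Nat.card_zmod p) (hd k))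
  · exact sumColouring_add_injective (Ring.two_ne_zero (by rwa [ringChar_zmod_n])) _
  · rintro ⟨a, b⟩ hab
    simp only [Equiv.coe_addRight, Sym2.exists_mk_add_eq_mk_iff]
    exact existsUnique_natCast_succ_eq_or_eq_neg hodd
      (sub_ne_zero.mpr fun h => hab (Sym2.mk_isDiag_iff.mpr h.symm))

end ZMod

/-- For every prime `n ≥ 3` there is a proper edge-colouring of `K_n` with `n`
colours and a decomposition of the edge set of `K_n` into `(n-1)/2` rainbow Hamiltonian cycles
(encoded as `n`-cycle permutations; every non-loop edge lies on exactly one of the cycles). -/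
theorem statement_8 :
    ∀ n : ℕ, n.Prime → 3 ≤ n →
      ∃ (c : Sym2 (Fin n) → Fin n) (σ : Fin ((n - 1) / 2) → Equiv.Perm (Fin n)),
        (∀ e f : Sym2 (Fin n), ¬e.IsDiag → ¬f.IsDiag → e ≠ f →
          (∃ v, v ∈ e ∧ v ∈ f) → c e ≠ c f) ∧
        (∀ k, (σ k).IsCycle ∧ (σ k).support = Finset.univ) ∧
        (∀ k, Function.Injective (fun i => c s(i, σ k i))) ∧
        (∀ e : Sym2 (Fin n), ¬e.IsDiag → ∃! k, ∃ i, s(i, σ k i) = e) := by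
  intro n hn h3
  obtain ⟨m, rfl⟩ : ∃ m, n = m + 1 := ⟨n - 1, by omega⟩
  have : Fact (m + 1).Prime := ⟨hn⟩
  -- `Fin (m + 1)` and `ZMod (m + 1)` are definitionally equal.
  exact ZMod.exists_properColouring_rainbowCycle_decomposition (m + 1) (by omega)
end

section
/- Let n, t be positive integers and p a real number with t ≥ pn, pt ≥ 1 and 0 < p ≤ 1/2. Let G be a properly edge-coloured balanced bipartite graph on 2n vertices (both parts of size n) with minimum degree δ(G) ≥ t, and let M_1, …, M_t be pairwise edge-disjoint rainbow matchings in G with e(M_i) ≥ (1−p³)n for every i. Then G contains pairwise edge-disjoint rainbow matchings M′_1, …, M′_m with m = ⌊(1−p)t⌋, such that e(M′_i) ≥ (1−10p)n for every i and the union M′_1 ∪ ⋯ ∪ M′_m has minimum degree at least (1−101p)t. -/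
/-- Degree of a vertex `x` of the first part in a bipartite graph given as a set of pairs. -/
def bdegX {n : ℕ} (G : Finset (Fin n × Fin n)) (x : Fin n) : ℕ :=
  (G.filter (fun e => e.1 = x)).card

/-- Degree of a vertex `y` of the second part in a bipartite graph given as a set of pairs. -/
def bdegY {n : ℕ} (G : Finset (Fin n × Fin n)) (y : Fin n) : ℕ :=
  (G.filter (fun e => e.2 = y)).card

/-- A set of pairs is a matching if distinct edges share no endpoint. -/
def IsBipMatching {n : ℕ} (M : Finset (Fin n × Fin n)) : Prop :=
  ∀ e ∈ M, ∀ f ∈ M, e ≠ f → e.1 ≠ f.1 ∧ e.2 ≠ f.2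

/-- A colouring is proper on `G` if edges of `G` sharing an endpoint get distinct colours. -/
def ProperBipColouring {n : ℕ} (G : Finset (Fin n × Fin n)) (c : Fin n × Fin n → ℕ) : Prop :=
  ∀ e ∈ G, ∀ f ∈ G, e ≠ f → e.1 = f.1 ∨ e.2 = f.2 → c e ≠ c f

/-!
Keep the first `m = ⌊(1-p)t⌋` matchings. Each misses at most `2p³n ≤ 2p²t` of the `2n` vertices,
so at most `pt/20` vertices are *bad*, i.e. missed by more than `40pt` of them. For every
matching `Mₖ` and every bad vertex `v` it misses, add to `Mₖ` an edge at `v` and remove the (at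
most two) edges of `Mₖ` that share a vertex or the colour with it; this *harms* their ends. Of the
at least `t` edges at `v` fewer than `t` are unusable: fewer than `m` lie in the other matchings,
and `O(pt)` would clash with the edges added to `Mₖ` earlier or harm a bad vertex or a vertex
already harmed almost `57pt` times (by double counting there are at most `pt/7` of the latter).
So the greedy process goes through. Afterwards every bad vertex lies in all `m` matchings and
every other vertex is missed by at most `40pt + 57pt` of them, while each matching shrinks by at
most `2p³n`: it loses at most two edges per edge gained and gains one per bad vertex it missed.
-/

namespace BipartiteRainbow

open Finset

section Vertices

variable {n : ℕ}

/-- `inl x` is the vertex `x` of the first part and `inr y` the vertex `y` of the second, so that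
the pair `(x, y)` is the edge joining them. -/
abbrev Vert (n : ℕ) := Fin n ⊕ Fin n

def ends (e : Fin n × Fin n) : Finset (Vert n) := {.inl e.1, .inr e.2}

def verts (M : Finset (Fin n × Fin n)) : Finset (Vert n) := M.biUnion ends

def deg (G : Finset (Fin n × Fin n)) (v : Vert n) : ℕ := #{e ∈ G | v ∈ ends e}

@[simp] lemma mem_ends {e : Fin n × Fin n} {v : Vert n} :
    v ∈ ends e ↔ v = .inl e.1 ∨ v = .inr e.2 := by
  simp [ends]

lemma mem_verts {M : Finset (Fin n × Fin n)} {v : Vert n} : v ∈ verts M ↔ ∃ e ∈ M, v ∈ ends e :=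
  mem_biUnion

lemma card_ends (e : Fin n × Fin n) : #(ends e) = 2 :=
  card_pair Sum.inl_ne_inr

lemma disjoint_ends_iff {e f : Fin n × Fin n} :
    Disjoint (ends e) (ends f) ↔ e.1 ≠ f.1 ∧ e.2 ≠ f.2 := by
  simp [ends, eq_comm]

lemma not_disjoint_ends_iff {e f : Fin n × Fin n} :
    ¬Disjoint (ends e) (ends f) ↔ e.1 = f.1 ∨ e.2 = f.2 := by
  rw [disjoint_ends_iff, not_and_or, not_not, not_not]

lemma eq_of_mem_ends_of_ne {e f : Fin n × Fin n} {v w : Vert n} (hvw : v ≠ w) (hve : v ∈ ends e)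
    (hwe : w ∈ ends e) (hvf : v ∈ ends f) (hwf : w ∈ ends f) : e = f := by
  simp only [mem_ends] at hve hwe hvf hwf
  rcases hve with rfl | rfl <;> rcases hwe with rfl | rfl <;> simp_all [Prod.ext_iff]

lemma deg_inl (G : Finset (Fin n × Fin n)) (x : Fin n) : deg G (.inl x) = bdegX G x := by
  simp [deg, bdegX, eq_comm]

lemma deg_inr (G : Finset (Fin n × Fin n)) (y : Fin n) : deg G (.inr y) = bdegY G y := by
  simp [deg, bdegY, eq_comm]

lemma verts_mono {M N : Finset (Fin n × Fin n)} (h : M ⊆ N) : verts M ⊆ verts N :=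
  biUnion_subset_biUnion_of_subset_left _ h

lemma verts_union (M N : Finset (Fin n × Fin n)) : verts (M ∪ N) = verts M ∪ verts N :=
  union_biUnion

lemma card_verts_le (M : Finset (Fin n × Fin n)) : #(verts M) ≤ 2 * #M := by
  calc #(verts M) ≤ ∑ e ∈ M, #(ends e) := card_biUnion_le
    _ = 2 * #M := by simp [card_ends, mul_comm]

lemma card_filter_other_end_mem_le (G : Finset (Fin n × Fin n)) (v : Vert n)
    (W : Finset (Vert n)) :
    #{e ∈ G | v ∈ ends e ∧ ∃ w ∈ ends e, w ≠ v ∧ w ∈ W} ≤ #W := by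
  calc #{e ∈ G | v ∈ ends e ∧ ∃ w ∈ ends e, w ≠ v ∧ w ∈ W}
      ≤ #(W.biUnion fun w => {e ∈ G | v ∈ ends e ∧ w ∈ ends e ∧ w ≠ v}) := by
        refine card_le_card fun e he => ?_
        simp only [mem_filter, mem_biUnion] at he ⊢
        obtain ⟨heG, hv, w, hw, hwv, hwW⟩ := he
        exact ⟨w, hwW, heG, hv, hw, hwv⟩
    _ ≤ ∑ _w ∈ W, 1 := by
        refine card_biUnion_le.trans (sum_le_sum fun w _ => card_le_one.2 ?_)
        simp only [mem_filter]
        rintro e ⟨-, hve, hwe, hwv⟩ f ⟨-, hvf, hwf, -⟩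
        exact eq_of_mem_ends_of_ne hwv.symm hve hwe hvf hwf
    _ = #W := by simp

lemma isBipMatching_iff {M : Finset (Fin n × Fin n)} :
    IsBipMatching M ↔ (M : Set (Fin n × Fin n)).PairwiseDisjoint ends := by
  simp [IsBipMatching, Set.PairwiseDisjoint, Set.Pairwise, Function.onFun, disjoint_ends_iff]

section IsBipMatching

variable {M : Finset (Fin n × Fin n)}

lemma _root_.IsBipMatching.eq_of_mem_ends (hM : IsBipMatching M) {e f : Fin n × Fin n}
    {v : Vert n} (he : e ∈ M) (hf : f ∈ M) (hve : v ∈ ends e) (hvf : v ∈ ends f) : e = f := by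
  by_contra hne
  exact disjoint_left.1 (isBipMatching_iff.1 hM he hf hne) hve hvf

lemma _root_.IsBipMatching.card_filter_mem_ends_le_one (hM : IsBipMatching M) (v : Vert n) :
    #{e ∈ M | v ∈ ends e} ≤ 1 := by
  refine card_le_one.2 fun e he f hf => ?_
  simp only [mem_filter] at he hf
  exact hM.eq_of_mem_ends he.1 hf.1 he.2 hf.2

lemma _root_.IsBipMatching.deg_eq (hM : IsBipMatching M) (v : Vert n) :
    deg M v = if v ∈ verts M then 1 else 0 := by
  split_ifs with hv
  · obtain ⟨e, he, hve⟩ := mem_verts.1 hv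
    exact le_antisymm (hM.card_filter_mem_ends_le_one v) (card_pos.2 ⟨e, mem_filter.2 ⟨he, hve⟩⟩)
  · exact card_eq_zero.2 (filter_eq_empty_iff.2 fun e he hve => hv (mem_verts.2 ⟨e, he, hve⟩))

lemma _root_.IsBipMatching.card_verts (hM : IsBipMatching M) : #(verts M) = 2 * #M := by
  rw [verts, card_biUnion (isBipMatching_iff.1 hM)]
  simp [card_ends, mul_comm]

lemma _root_.IsBipMatching.card_notMem_verts (hM : IsBipMatching M) :
    #{v : Vert n | v ∉ verts M} + 2 * #M = 2 * n := by
  rw [← hM.card_verts, filter_not, card_sdiff_of_subset (filter_subset _ _)]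
  simp only [filter_mem_eq_inter, univ_inter, card_univ, Fintype.card_sum, Fintype.card_fin]
  have : #(verts M) ≤ n + n := by simpa using card_le_univ (verts M)
  omega

lemma _root_.IsBipMatching.card_filter_not_disjoint_le (hM : IsBipMatching M)
    (W : Finset (Vert n)) : #{f ∈ M | ¬Disjoint (ends f) W} ≤ #(W ∩ verts M) := by
  calc #{f ∈ M | ¬Disjoint (ends f) W}
      ≤ #((W ∩ verts M).biUnion fun w => {f ∈ M | w ∈ ends f}) := by
        refine card_le_card fun f hf => ?_
        simp only [mem_filter, not_disjoint_iff] at hf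
        obtain ⟨hfM, w, hwf, hwW⟩ := hf
        exact mem_biUnion.2
          ⟨w, mem_inter.2 ⟨hwW, mem_verts.2 ⟨f, hfM, hwf⟩⟩, mem_filter.2 ⟨hfM, hwf⟩⟩
    _ ≤ ∑ _w ∈ W ∩ verts M, 1 :=
        card_biUnion_le.trans (sum_le_sum fun w _ => hM.card_filter_mem_ends_le_one w)
    _ = #(W ∩ verts M) := by simp

lemma _root_.IsBipMatching.insert {e : Fin n × Fin n} (hM : IsBipMatching M)
    (he : Disjoint (ends e) (verts M)) : IsBipMatching (insert e M) := by
  rw [isBipMatching_iff, coe_insert] at *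
  exact hM.insert fun f hf _ => he.mono_right (subset_biUnion_of_mem ends hf)

end IsBipMatching

lemma deg_biUnion {m : ℕ} {M : Fin m → Finset (Fin n × Fin n)} (hM : ∀ i, IsBipMatching (M i))
    (hdisj : ∀ i j, i ≠ j → Disjoint (M i) (M j)) (v : Vert n) :
    deg (univ.biUnion M) v = #{i | v ∈ verts (M i)} := by
  rw [deg, filter_biUnion, card_biUnion fun i _ j _ hij => disjoint_filter_filter (hdisj i j hij)]
  have hdeg (i : Fin m) : #{e ∈ M i | v ∈ ends e} = if v ∈ verts (M i) then 1 else 0 :=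
    (hM i).deg_eq v
  simp_rw [hdeg, sum_boole, Nat.cast_id]

lemma card_filter_colour_eq_le_one {M : Finset (Fin n × Fin n)} {c : Fin n × Fin n → ℕ}
    (hc : Set.InjOn c M) (k : ℕ) : #{f ∈ M | c f = k} ≤ 1 := by
  refine card_le_one.2 fun e he f hf => ?_
  simp only [mem_filter] at he hf
  exact hc he.1 hf.1 (he.2.trans hf.2.symm)

lemma _root_.ProperBipColouring.card_filter_colour_le {G : Finset (Fin n × Fin n)}
    {c : Fin n × Fin n → ℕ} (hG : ProperBipColouring G c) (v : Vert n)
    (F : Finset (Fin n × Fin n)) : #{e ∈ G | v ∈ ends e ∧ ∃ f ∈ F, c f = c e} ≤ #F := by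
  refine (card_le_card_of_injOn c (t := F.image c) ?_ ?_).trans card_image_le
  · intro e he
    simp only [coe_filter, Set.mem_ofPred_eq, coe_image, Set.mem_image, mem_coe] at he ⊢
    exact he.2.2
  · intro e he f hf hef
    simp only [coe_filter, Set.mem_ofPred_eq] at he hf
    by_contra hne
    exact hG e he.1 f hf.1 hne
      (not_disjoint_ends_iff.1 (not_disjoint_iff.2 ⟨v, he.2.1, hf.2.1⟩)) hef

end Vertices

lemma sum_card_filter_comm {ι κ : Type*} (s : Finset ι) (t : Finset κ) (r : ι → κ → Prop)
    [∀ i k, Decidable (r i k)] : ∑ k ∈ t, #{i ∈ s | r i k} = ∑ i ∈ s, #{k ∈ t | r i k} :=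
  (sum_card_bipartiteAbove_eq_sum_card_bipartiteBelow r).symm

lemma card_filter_lt_mul_le_sum {α : Type*} [Fintype α] (f : α → ℕ) (θ : ℝ) :
    (#{x | θ < f x} : ℝ) * θ ≤ ∑ x, (f x : ℝ) := by
  calc (#{x | θ < f x} : ℝ) * θ = ∑ x ∈ {x | θ < f x}, θ := by simp
    _ ≤ ∑ x ∈ {x | θ < f x}, (f x : ℝ) := sum_le_sum fun x hx => (mem_filter.1 hx).2.le
    _ ≤ ∑ x, (f x : ℝ) := sum_le_univ_sum_of_nonneg fun x => Nat.cast_nonneg _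

section Repair

variable {n : ℕ} (c : Fin n × Fin n → ℕ)

def Clash (f a : Fin n × Fin n) : Prop := ¬Disjoint (ends f) (ends a) ∨ c f = c a

instance (f a : Fin n × Fin n) : Decidable (Clash c f a) := by unfold Clash; infer_instance

def conflicts (M A : Finset (Fin n × Fin n)) : Finset (Fin n × Fin n) :=
  {f ∈ M | ∃ a ∈ A, Clash c f a}

def repair (M A : Finset (Fin n × Fin n)) : Finset (Fin n × Fin n) := (M \ conflicts c M A) ∪ A

lemma conflicts_subset (M A : Finset (Fin n × Fin n)) : conflicts c M A ⊆ M := filter_subset _ _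

lemma conflicts_insert (M A : Finset (Fin n × Fin n)) (e : Fin n × Fin n) :
    conflicts c M (insert e A) = conflicts c M A ∪ {f ∈ M | Clash c f e} := by
  ext f
  simp only [conflicts, mem_filter, mem_union, exists_mem_insert]
  rw [and_or_left, or_comm]

lemma repair_subset_union (M A : Finset (Fin n × Fin n)) : repair c M A ⊆ M ∪ A :=
  union_subset_union sdiff_subset subset_rfl

variable {c} {M A : Finset (Fin n × Fin n)}

lemma disjoint_ends_of_mem_repair {f a : Fin n × Fin n} (hf : f ∈ M \ conflicts c M A)
    (ha : a ∈ A) : Disjoint (ends f) (ends a) ∧ c f ≠ c a := by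
  obtain ⟨hfM, hfC⟩ := mem_sdiff.1 hf
  have : ¬Clash c f a := fun h => hfC (mem_filter.2 ⟨hfM, a, ha, h⟩)
  exact (not_or.1 this).imp_left not_not.1

lemma _root_.IsBipMatching.repair (hM : IsBipMatching M) (hA : IsBipMatching A) :
    IsBipMatching (repair c M A) := by
  rw [isBipMatching_iff] at *
  rw [BipartiteRainbow.repair, coe_union, Set.pairwiseDisjoint_union]
  exact ⟨hM.subset (coe_subset.2 sdiff_subset), hA,
    fun f hf a ha _ => (disjoint_ends_of_mem_repair hf ha).1⟩

lemma injOn_repair (hMA : Disjoint M A) (hM : Set.InjOn c M) (hA : Set.InjOn c A) :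
    Set.InjOn c (repair c M A) := by
  rw [repair, coe_union, Set.injOn_union (disjoint_coe.2 (hMA.mono_left sdiff_subset))]
  exact ⟨hM.mono (coe_subset.2 sdiff_subset), hA,
    fun f hf a ha => (disjoint_ends_of_mem_repair hf ha).2⟩

lemma card_repair_add (hMA : Disjoint M A) :
    #(repair c M A) + #(conflicts c M A) = #M + #A := by
  rw [repair, card_union_of_disjoint (hMA.mono_left sdiff_subset),
    card_sdiff_of_subset (conflicts_subset c M A)]
  have := card_le_card (conflicts_subset c M A)
  omega

lemma notMem_verts_repair {v : Vert n} (hv : v ∉ verts (repair c M A)) :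
    v ∉ verts A ∧ (v ∉ verts M ∨ v ∈ verts (conflicts c M A)) := by
  refine ⟨fun hvA => hv (verts_mono subset_union_right hvA),
    or_iff_not_imp_right.2 fun hvC hvM => ?_⟩
  obtain ⟨f, hf, hvf⟩ := mem_verts.1 hvM
  refine hv (mem_verts.2 ⟨f, mem_union_left _ (mem_sdiff.2 ⟨hf, fun hfC => ?_⟩), hvf⟩)
  exact hvC (mem_verts.2 ⟨f, hfC, hvf⟩)

end Repair

section Augmentation

variable {n m : ℕ} (c : Fin n × Fin n → ℕ) (Mk : Fin m → Finset (Fin n × Fin n))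

def missCount (v : Vert n) : ℕ := #{i | v ∉ verts (Mk i)}

noncomputable def bad (β : ℝ) : Finset (Vert n) := {v | β < missCount Mk v}

def harm (A : Fin m → Finset (Fin n × Fin n)) (v : Vert n) : ℕ :=
  #{i | v ∈ verts (conflicts c (Mk i) (A i))}

noncomputable def saturated (γ : ℝ) (A : Fin m → Finset (Fin n × Fin n)) : Finset (Vert n) :=
  {v | γ < (harm c Mk A v : ℝ) + 1}

/-- `A i` holds the edges added so far to `Mk i`. -/
structure IsAugmentation (G : Finset (Fin n × Fin n)) (B : Finset (Vert n)) (γ : ℝ)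
    (A : Fin m → Finset (Fin n × Fin n)) : Prop where
  subset : ∀ i, A i ⊆ G
  disjoint_mk : ∀ i j, Disjoint (A i) (Mk j)
  matching : ∀ i, IsBipMatching (A i)
  rainbow : ∀ i, Set.InjOn c (A i)
  pairwise_disjoint : ∀ i j, i ≠ j → Disjoint (A i) (A j)
  anchored : ∀ i, ∀ a ∈ A i, ∃ u ∈ ends a, u ∈ B ∧ u ∉ verts (Mk i) ∧ ∀ w ∈ ends a, w ≠ u → w ∉ B
  disjoint_conflicts : ∀ i, Disjoint (verts (conflicts c (Mk i) (A i))) B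
  harm_le : ∀ v, (harm c Mk A v : ℝ) ≤ γ

/-- `S` is the set of vertices that adding `e` to `A i` must not harm. -/
structure IsSafeEdge (G : Finset (Fin n × Fin n)) (S : Finset (Vert n))
    (A : Fin m → Finset (Fin n × Fin n)) (i : Fin m) (v : Vert n) (e : Fin n × Fin n) : Prop where
  mem : e ∈ G
  mem_ends : v ∈ ends e
  notMem_mk : ∀ j, e ∉ Mk j
  notMem_aug : ∀ j, e ∉ A j
  other_end : ∀ w ∈ ends e, w ≠ v →
    w ∉ S ∧ w ∉ verts (A i) ∧ ∀ f ∈ Mk i, w ∈ ends f → Disjoint (ends f) S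
  colour_mk : ∀ f ∈ Mk i, c f = c e → Disjoint (ends f) S
  colour_aug : ∀ a ∈ A i, c a ≠ c e

lemma sum_missCount : ∑ v, missCount Mk v = ∑ i, #{v : Vert n | v ∉ verts (Mk i)} :=
  sum_card_filter_comm _ _ _

variable {c Mk} {G : Finset (Fin n × Fin n)} {B : Finset (Vert n)} {γ : ℝ}
  {A : Fin m → Finset (Fin n × Fin n)}

lemma isAugmentation_empty (hγ : 0 ≤ γ) : IsAugmentation c Mk G B γ fun _ => ∅ where
  subset _ := empty_subset _
  disjoint_mk _ _ := disjoint_empty_left _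
  matching _ := by simp [IsBipMatching]
  rainbow _ := by simp
  pairwise_disjoint _ _ _ := disjoint_empty_left _
  anchored _ := by simp
  disjoint_conflicts _ := by simp [conflicts, verts]
  harm_le _ := by simpa [harm, conflicts, verts] using hγ

lemma harm_update_le (A : Fin m → Finset (Fin n × Fin n)) (i : Fin m)
    (s : Finset (Fin n × Fin n)) (w : Vert n) :
    harm c Mk (Function.update A i s) w ≤ harm c Mk A w + 1 := by
  refine (card_le_card fun j hj => ?_).trans (card_insert_le i _)
  rcases eq_or_ne j i with rfl | hji
  · exact mem_insert_self _ _
  · simpa [hji] using hj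

lemma harm_update_le_of_imp (A : Fin m → Finset (Fin n × Fin n)) (i : Fin m)
    (s : Finset (Fin n × Fin n)) (w : Vert n)
    (h : w ∈ verts (conflicts c (Mk i) s) → w ∈ verts (conflicts c (Mk i) (A i))) :
    harm c Mk (Function.update A i s) w ≤ harm c Mk A w := by
  refine card_le_card fun j hj => ?_
  rcases eq_or_ne j i with rfl | hji
  · simpa using h (by simpa using hj)
  · simpa [hji] using hj

namespace IsSafeEdge

variable {S : Finset (Vert n)} {i : Fin m} {v : Vert n} {e : Fin n × Fin n}

lemma disjoint_verts_clash (he : IsSafeEdge c Mk G S A i v e) (hvM : v ∉ verts (Mk i)) :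
    Disjoint (verts {f ∈ Mk i | Clash c f e}) S := by
  refine disjoint_left.2 fun w hw => ?_
  obtain ⟨f, hf, hwf⟩ := mem_verts.1 hw
  obtain ⟨hfM, hfe | hfe⟩ := mem_filter.1 hf
  · obtain ⟨x, hxf, hxe⟩ := not_disjoint_iff.1 hfe
    refine disjoint_left.1 ((he.other_end x hxe ?_).2.2 f hfM hxf) hwf
    rintro rfl
    exact hvM (mem_verts.2 ⟨f, hfM, hxf⟩)
  · exact disjoint_left.1 (he.colour_mk f hfM hfe) hwf

lemma disjoint_ends_verts (he : IsSafeEdge c Mk G S A i v e) (hvA : v ∉ verts (A i)) :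
    Disjoint (ends e) (verts (A i)) := by
  refine disjoint_left.2 fun w hwe hwA => ?_
  rcases eq_or_ne w v with rfl | hwv
  · exact hvA hwA
  · exact (he.other_end w hwe hwv).2.1 hwA

end IsSafeEdge

namespace IsAugmentation

lemma card_le (hA : IsAugmentation c Mk G B γ A) (i : Fin m) :
    #(A i) ≤ #{u ∈ B | u ∉ verts (Mk i)} := by
  have hall : {a ∈ A i | ¬Disjoint (ends a) {u ∈ B | u ∉ verts (Mk i)}} = A i := by
    refine filter_true_of_mem fun a ha => ?_
    obtain ⟨u, hua, huB, huM, -⟩ := hA.anchored i a ha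
    exact not_disjoint_iff.2 ⟨u, hua, mem_filter.2 ⟨huB, huM⟩⟩
  rw [← hall]
  exact ((hA.matching i).card_filter_not_disjoint_le _).trans (card_le_card inter_subset_left)

lemma card_conflicts_le (hA : IsAugmentation c Mk G B γ A) {i : Fin m}
    (hM : IsBipMatching (Mk i)) (hc : Set.InjOn c (Mk i)) :
    #(conflicts c (Mk i) (A i)) ≤ 2 * #(A i) := by
  have hclash : ∀ a ∈ A i, #{f ∈ Mk i | Clash c f a} ≤ 2 := by
    intro a ha
    obtain ⟨u, hua, -, huM, -⟩ := hA.anchored i a ha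
    have hshare : #(ends a ∩ verts (Mk i)) ≤ 1 := by
      calc #(ends a ∩ verts (Mk i)) ≤ #((ends a).erase u) :=
            card_le_card fun w hw => mem_erase.2
              ⟨fun hwu => huM (hwu ▸ (mem_inter.1 hw).2), (mem_inter.1 hw).1⟩
        _ = 1 := by rw [card_erase_of_mem hua, card_ends]
    calc #{f ∈ Mk i | Clash c f a}
        = #({f ∈ Mk i | ¬Disjoint (ends f) (ends a)} ∪ {f ∈ Mk i | c f = c a}) := by
          rw [← filter_or]; rfl
      _ ≤ 1 + 1 := (card_union_le _ _).trans (add_le_add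
          ((hM.card_filter_not_disjoint_le _).trans hshare) (card_filter_colour_eq_le_one hc _))
  calc #(conflicts c (Mk i) (A i))
      ≤ #((A i).biUnion fun a => {f ∈ Mk i | Clash c f a}) := by
        refine card_le_card fun f hf => ?_
        obtain ⟨hfM, a, ha, hfa⟩ := mem_filter.1 hf
        exact mem_biUnion.2 ⟨a, ha, mem_filter.2 ⟨hfM, hfa⟩⟩
    _ ≤ ∑ _a ∈ A i, 2 := card_biUnion_le.trans (sum_le_sum hclash)
    _ = 2 * #(A i) := by simp [mul_comm]

lemma sum_harm_le (hA : IsAugmentation c Mk G B γ A) (hM : ∀ i, IsBipMatching (Mk i))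
    (hc : ∀ i, Set.InjOn c (Mk i)) : ∑ v, harm c Mk A v ≤ 4 * ∑ u ∈ B, missCount Mk u := by
  calc ∑ v, harm c Mk A v = ∑ i, #(verts (conflicts c (Mk i) (A i))) := by
        simp only [harm, sum_card_filter_comm, filter_mem_eq_inter, univ_inter]
    _ ≤ ∑ i, 4 * #{u ∈ B | u ∉ verts (Mk i)} := by
        refine sum_le_sum fun i _ => ?_
        calc #(verts (conflicts c (Mk i) (A i))) ≤ 2 * #(conflicts c (Mk i) (A i)) :=
              card_verts_le _
          _ ≤ 2 * (2 * #(A i)) := by gcongr; exact hA.card_conflicts_le (hM i) (hc i)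
          _ ≤ 4 * #{u ∈ B | u ∉ verts (Mk i)} := by linarith [hA.card_le i]
    _ = 4 * ∑ u ∈ B, missCount Mk u := by
        rw [← mul_sum]
        exact congrArg _ (sum_card_filter_comm _ _ _).symm

lemma harm_update_insert_le (hA : IsAugmentation c Mk G B γ A) {i : Fin m} {v : Vert n}
    {e : Fin n × Fin n} (hvM : v ∉ verts (Mk i))
    (he : IsSafeEdge c Mk G (B ∪ saturated c Mk γ A) A i v e) (w : Vert n) :
    (harm c Mk (Function.update A i (insert e (A i))) w : ℝ) ≤ γ := by
  by_cases hw : w ∈ verts {f ∈ Mk i | Clash c f e}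
  · have hunsat : (harm c Mk A w : ℝ) + 1 ≤ γ := by
      simpa [saturated] using
        fun h => disjoint_left.1 (he.disjoint_verts_clash hvM) hw (mem_union_right _ h)
    exact le_trans (by exact_mod_cast harm_update_le A i _ w) hunsat
  · refine le_trans (Nat.cast_le.2 (harm_update_le_of_imp A i _ w fun hw' => ?_)) (hA.harm_le w)
    rw [conflicts_insert, verts_union] at hw'
    exact (mem_union.1 hw').resolve_right hw

lemma update_insert (hA : IsAugmentation c Mk G B γ A) {i : Fin m} {v : Vert n}
    {e : Fin n × Fin n} (hvB : v ∈ B) (hvM : v ∉ verts (Mk i)) (hvA : v ∉ verts (A i))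
    (he : IsSafeEdge c Mk G (B ∪ saturated c Mk γ A) A i v e) :
    IsAugmentation c Mk G B γ (Function.update A i (insert e (A i))) where
  subset := (Function.forall_update_iff A fun _ s => s ⊆ G).2
    ⟨insert_subset he.mem (hA.subset i), fun j _ => hA.subset j⟩
  disjoint_mk j k := by
    rw [Function.update_apply]
    split_ifs with hj
    · exact disjoint_insert_left.2 ⟨he.notMem_mk k, hj ▸ hA.disjoint_mk i k⟩
    · exact hA.disjoint_mk j k
  matching := (Function.forall_update_iff A fun _ s => IsBipMatching s).2
    ⟨(hA.matching i).insert (he.disjoint_ends_verts hvA), fun j _ => hA.matching j⟩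
  rainbow := by
    refine (Function.forall_update_iff A fun _ s => Set.InjOn c s).2 ⟨?_, fun j _ => hA.rainbow j⟩
    rw [coe_insert, Set.injOn_insert (he.notMem_aug i)]
    exact ⟨hA.rainbow i, fun ⟨a, ha, hca⟩ => he.colour_aug a ha hca⟩
  pairwise_disjoint j k hjk := by
    simp only [Function.update_apply]
    split_ifs with hj hk hk
    · exact absurd (hj.trans hk.symm) hjk
    · exact disjoint_insert_left.2 ⟨he.notMem_aug k, hj ▸ hA.pairwise_disjoint j k hjk⟩
    · exact disjoint_insert_right.2 ⟨he.notMem_aug j, hk ▸ hA.pairwise_disjoint j k hjk⟩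
    · exact hA.pairwise_disjoint j k hjk
  anchored := by
    refine (Function.forall_update_iff A fun j s => ∀ a ∈ s, ∃ u ∈ ends a, u ∈ B ∧
      u ∉ verts (Mk j) ∧ ∀ w ∈ ends a, w ≠ u → w ∉ B).2 ⟨?_, fun j _ => hA.anchored j⟩
    intro a ha
    rcases mem_insert.1 ha with rfl | ha
    · exact ⟨v, he.mem_ends, hvB, hvM, fun w hw hwv hwB =>
        (he.other_end w hw hwv).1 (mem_union_left _ hwB)⟩
    · exact hA.anchored i a ha
  disjoint_conflicts := by
    refine (Function.forall_update_iff A fun j s => Disjoint (verts (conflicts c (Mk j) s)) B).2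
      ⟨?_, fun j _ => hA.disjoint_conflicts j⟩
    rw [conflicts_insert, verts_union]
    exact disjoint_union_left.2
      ⟨hA.disjoint_conflicts i, (he.disjoint_verts_clash hvM).mono_right subset_union_left⟩
  harm_le := hA.harm_update_insert_le hvM he

lemma notMem_ends_of_mem_verts (hA : IsAugmentation c Mk G B γ A) {j : Fin m} {v : Vert n}
    (hvB : v ∈ B) (hvM : v ∈ verts (Mk j)) {a : Fin n × Fin n} (ha : a ∈ A j) : v ∉ ends a := by
  intro hva
  obtain ⟨u, -, -, huM, hother⟩ := hA.anchored j a ha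
  rcases eq_or_ne v u with rfl | hvu
  · exact huM hvM
  · exact hother v hva hvu hvB

lemma card_filter_mem_ends_le_one (hA : IsAugmentation c Mk G B γ A)
    (hM : ∀ j, IsBipMatching (Mk j)) {v : Vert n} (hvB : v ∈ B) (j : Fin m) :
    #{e ∈ Mk j ∪ A j | v ∈ ends e} ≤ 1 := by
  by_cases hvM : v ∈ verts (Mk j)
  · refine le_trans (card_le_card fun e he => ?_) ((hM j).card_filter_mem_ends_le_one v)
    obtain ⟨he, hve⟩ := mem_filter.1 he
    refine mem_filter.2 ⟨(mem_union.1 he).resolve_right fun ha => ?_, hve⟩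
    exact hA.notMem_ends_of_mem_verts hvB hvM ha hve
  · refine le_trans (card_le_card fun e he => ?_) ((hA.matching j).card_filter_mem_ends_le_one v)
    obtain ⟨he, hve⟩ := mem_filter.1 he
    refine mem_filter.2 ⟨(mem_union.1 he).resolve_left fun hm => ?_, hve⟩
    exact hvM (mem_verts.2 ⟨e, hm, hve⟩)

lemma card_filter_used_lt (hA : IsAugmentation c Mk G B γ A) (hM : ∀ j, IsBipMatching (Mk j))
    {i : Fin m} {v : Vert n} (hvB : v ∈ B) (hvM : v ∉ verts (Mk i)) (hvA : v ∉ verts (A i)) :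
    #{e ∈ G | v ∈ ends e ∧ ∃ j, e ∈ Mk j ∨ e ∈ A j} < m := by
  calc #{e ∈ G | v ∈ ends e ∧ ∃ j, e ∈ Mk j ∨ e ∈ A j}
      ≤ #((univ.erase i).biUnion fun j => {e ∈ Mk j ∪ A j | v ∈ ends e}) := by
        refine card_le_card fun e he => ?_
        obtain ⟨-, hve, j, hj⟩ := mem_filter.1 he
        refine mem_biUnion.2 ⟨j, mem_erase.2 ⟨?_, mem_univ j⟩, mem_filter.2 ⟨mem_union.2 hj, hve⟩⟩
        rintro rfl
        rcases hj with hj | hj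
        exacts [hvM (mem_verts.2 ⟨e, hj, hve⟩), hvA (mem_verts.2 ⟨e, hj, hve⟩)]
    _ ≤ ∑ _j ∈ univ.erase i, 1 :=
        card_biUnion_le.trans (sum_le_sum fun j _ => hA.card_filter_mem_ends_le_one hM hvB j)
    _ < m := by simp [card_erase_of_mem, i.pos]

lemma exists_isSafeEdge (hA : IsAugmentation c Mk G B γ A) (hM : ∀ j, IsBipMatching (Mk j))
    (hG : ProperBipColouring G c) {S : Finset (Vert n)} {i : Fin m} {v : Vert n} (hvB : v ∈ B)
    (hvM : v ∉ verts (Mk i)) (hvA : v ∉ verts (A i)) (hdeg : m + 4 * #S + 3 * #(A i) ≤ deg G v) :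
    ∃ e, IsSafeEdge c Mk G S A i v e := by
  set exposed := {f ∈ Mk i | ¬Disjoint (ends f) S}
  set W := S ∪ verts (A i) ∪ verts exposed
  set used := {e ∈ G | v ∈ ends e ∧ ∃ j, e ∈ Mk j ∨ e ∈ A j}
  set near := {e ∈ G | v ∈ ends e ∧ ∃ w ∈ ends e, w ≠ v ∧ w ∈ W}
  set clashing := {e ∈ G | v ∈ ends e ∧ ∃ f ∈ exposed ∪ A i, c f = c e}
  have hexposed : #exposed ≤ #S := ((hM i).card_filter_not_disjoint_le S).trans
    (card_le_card inter_subset_left)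
  have hW : #W ≤ #S + 2 * #(A i) + 2 * #exposed :=
    (card_union_le _ _).trans (add_le_add ((card_union_le _ _).trans
      (add_le_add_right (card_verts_le _) _)) (card_verts_le _))
  have hbad : #(used ∪ near ∪ clashing) < #{e ∈ G | v ∈ ends e} := by
    have h1 : #used < m := hA.card_filter_used_lt hM hvB hvM hvA
    have h2 : #near ≤ #W := card_filter_other_end_mem_le G v W
    have h3 : #clashing ≤ #(exposed ∪ A i) := hG.card_filter_colour_le v _
    have h4 := card_union_le exposed (A i)
    have h5 := card_union_le (used ∪ near) clashing
    have h6 := card_union_le used near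
    change _ ≤ #{e ∈ G | v ∈ ends e} at hdeg
    omega
  obtain ⟨e, he, hgood⟩ := exists_mem_notMem_of_card_lt_card hbad
  obtain ⟨heG, hve⟩ := mem_filter.1 he
  simp only [used, near, clashing, W, exposed, mem_union, mem_filter, heG, hve, true_and,
    not_or, not_exists, not_and] at hgood
  obtain ⟨⟨hused, hnear⟩, hclash⟩ := hgood
  refine ⟨e, heG, hve, fun j => (hused j).1, fun j => (hused j).2, fun w hw hwv => ?_,
    fun f hf hcf => ?_, fun a ha hca => hclash a (Or.inr ha) hca⟩
  · obtain ⟨⟨hwS, hwA⟩, hwexposed⟩ := hnear w hw hwv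
    refine ⟨hwS, hwA, fun f hf hwf => ?_⟩
    by_contra hfS
    exact hwexposed (mem_verts.2 ⟨f, mem_filter.2 ⟨hf, hfS⟩, hwf⟩)
  · by_contra hfS
    exact hclash f (Or.inl ⟨hf, hfS⟩) hcf

lemma disjoint_repair (hA : IsAugmentation c Mk G B γ A)
    (hdisj : ∀ i j, i ≠ j → Disjoint (Mk i) (Mk j)) {i j : Fin m} (hij : i ≠ j) :
    Disjoint (repair c (Mk i) (A i)) (repair c (Mk j) (A j)) := by
  refine Disjoint.mono (repair_subset_union c _ _) (repair_subset_union c _ _) ?_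
  exact disjoint_union_left.2 ⟨disjoint_union_right.2 ⟨hdisj i j hij, (hA.disjoint_mk j i).symm⟩,
    disjoint_union_right.2 ⟨hA.disjoint_mk i j, hA.pairwise_disjoint i j hij⟩⟩

lemma three_mul_card_le_card_repair_add (hA : IsAugmentation c Mk G B γ A) {i : Fin m}
    (hM : IsBipMatching (Mk i)) (hc : Set.InjOn c (Mk i)) :
    3 * #(Mk i) ≤ #(repair c (Mk i) (A i)) + 2 * n := by
  have h1 := card_repair_add (c := c) (hA.disjoint_mk i i).symm
  have h2 := hA.card_conflicts_le hM hc
  have h3 : #(A i) ≤ #{v : Vert n | v ∉ verts (Mk i)} :=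
    (hA.card_le i).trans (card_le_card (filter_subset_filter _ (subset_univ B)))
  have h4 := hM.card_notMem_verts
  omega

/-- A vertex of `B` is covered by every repaired matching, since the removed edges avoid `B`. -/
lemma card_filter_notMem_verts_repair_le {β : ℝ} (hA : IsAugmentation c Mk G (bad Mk β) γ A)
    (hβ : 0 ≤ β) (hcov : ∀ i, ∀ v ∈ bad Mk β, v ∉ verts (Mk i) → v ∈ verts (A i)) (v : Vert n) :
    (#{i | v ∉ verts (repair c (Mk i) (A i))} : ℝ) ≤ β + γ := by
  have hmiss (i : Fin m) (hi : v ∉ verts (repair c (Mk i) (A i))) :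
      v ∉ bad Mk β ∧ (v ∉ verts (Mk i) ∨ v ∈ verts (conflicts c (Mk i) (A i))) := by
    obtain ⟨hvA, hvM⟩ := notMem_verts_repair hi
    refine ⟨fun hvB => ?_, hvM⟩
    rcases hvM with hvM | hvC
    · exact hvA (hcov i v hvB hvM)
    · exact disjoint_left.1 (hA.disjoint_conflicts i) hvC hvB
  have hγ : 0 ≤ γ := (Nat.cast_nonneg _).trans (hA.harm_le v)
  by_cases hvB : v ∈ bad Mk β
  · rw [filter_false_of_mem fun i _ hi => (hmiss i hi).1 hvB]
    simpa using add_nonneg hβ hγ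
  · have hβv : (missCount Mk v : ℝ) ≤ β := by simpa [bad] using hvB
    have hcard : #{i | v ∉ verts (repair c (Mk i) (A i))} ≤ missCount Mk v + harm c Mk A v := by
      refine (card_le_card fun i hi => ?_).trans (card_union_le _ _)
      simpa [missCount, harm] using (hmiss i (mem_filter.1 hi).2).2
    exact (Nat.cast_le.2 hcard).trans (by push_cast; linarith [hA.harm_le v])

end IsAugmentation

lemma exists_isAugmentation_covering (hγ : 0 ≤ γ)
    (hstep : ∀ A, IsAugmentation c Mk G B γ A → ∀ i, ∀ v ∈ B, v ∉ verts (Mk i) →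
      v ∉ verts (A i) → ∃ A', IsAugmentation c Mk G B γ A' ∧ (∀ j, A j ⊆ A' j) ∧ v ∈ verts (A' i)) :
    ∃ A, IsAugmentation c Mk G B γ A ∧ ∀ i, ∀ v ∈ B, v ∉ verts (Mk i) → v ∈ verts (A i) := by
  classical
  suffices ∀ T : Finset (Fin m × Vert n), ∃ A, IsAugmentation c Mk G B γ A ∧
      ∀ q ∈ T, q.2 ∈ B → q.2 ∉ verts (Mk q.1) → q.2 ∈ verts (A q.1) by
    obtain ⟨A, hA, hcov⟩ := this univ
    exact ⟨A, hA, fun i v hvB hvM => hcov (i, v) (mem_univ _) hvB hvM⟩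
  intro T
  induction T using Finset.induction_on with
  | empty => exact ⟨_, isAugmentation_empty hγ, by simp⟩
  | insert q T _ ih =>
    obtain ⟨A, hA, hcov⟩ := ih
    by_cases hq : q.2 ∈ B ∧ q.2 ∉ verts (Mk q.1) ∧ q.2 ∉ verts (A q.1)
    · obtain ⟨A', hA', hmono, hq'⟩ := hstep A hA q.1 q.2 hq.1 hq.2.1 hq.2.2
      refine ⟨A', hA', (forall_mem_insert _ _ _).2 ⟨fun _ _ => hq', fun r hr hrB hrM => ?_⟩⟩
      exact verts_mono (hmono r.1) (hcov r hr hrB hrM)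
    · refine ⟨A, hA, (forall_mem_insert _ _ _).2 ⟨fun hqB hqM => ?_, hcov⟩⟩
      by_contra hqA
      exact hq ⟨hqB, hqM, hqA⟩

end Augmentation

section Estimates

variable {n m t : ℕ} {p : ℝ} {c : Fin n × Fin n → ℕ} {Mk : Fin m → Finset (Fin n × Fin n)}
  {G : Finset (Fin n × Fin n)} {A : Fin m → Finset (Fin n × Fin n)}

lemma sum_missCount_le (hp : 0 < p) (hpn : p * n ≤ t) (hmt : (m : ℝ) ≤ t)
    (hM : ∀ i, IsBipMatching (Mk i)) (hsize : ∀ i, (1 - p ^ 3) * n ≤ (#(Mk i) : ℝ)) :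
    ∑ v, (missCount Mk v : ℝ) ≤ 2 * p ^ 2 * t ^ 2 := by
  have hmiss (i : Fin m) : (#{v : Vert n | v ∉ verts (Mk i)} : ℝ) ≤ 2 * p ^ 3 * n := by
    have h : (#{v : Vert n | v ∉ verts (Mk i)} : ℝ) + 2 * #(Mk i) = 2 * n := by
      exact_mod_cast (hM i).card_notMem_verts
    linarith [hsize i]
  calc ∑ v, (missCount Mk v : ℝ) = ∑ i, (#{v : Vert n | v ∉ verts (Mk i)} : ℝ) := by
        exact_mod_cast sum_missCount Mk
    _ ≤ ∑ _i : Fin m, 2 * p ^ 3 * n := sum_le_sum fun i _ => hmiss i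
    _ = m * (2 * p ^ 2 * (p * n)) := by
        rw [sum_const, card_univ, Fintype.card_fin, nsmul_eq_mul]; ring
    _ ≤ t * (2 * p ^ 2 * t) := by gcongr
    _ = 2 * p ^ 2 * t ^ 2 := by ring

lemma card_bad_le (hp : 0 < p) (hpt : 1 ≤ p * t) (hpn : p * n ≤ t) (hmt : (m : ℝ) ≤ t)
    (hM : ∀ i, IsBipMatching (Mk i)) (hsize : ∀ i, (1 - p ^ 3) * n ≤ (#(Mk i) : ℝ)) :
    (#(bad Mk (40 * p * t)) : ℝ) ≤ p * t / 20 := by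
  have h := (card_filter_lt_mul_le_sum (missCount Mk) (40 * p * t)).trans
    (sum_missCount_le hp hpn hmt hM hsize)
  rw [← bad] at h
  refine le_of_mul_le_mul_right ?_ (by linarith : (0 : ℝ) < 40 * p * t)
  linarith

lemma IsAugmentation.card_saturated_le
    (hA : IsAugmentation c Mk G (bad Mk (40 * p * t)) (57 * p * t) A) (hp : 0 < p)
    (hpt : 1 ≤ p * t) (hpn : p * n ≤ t) (hmt : (m : ℝ) ≤ t) (hM : ∀ i, IsBipMatching (Mk i))
    (hc : ∀ i, Set.InjOn c (Mk i)) (hsize : ∀ i, (1 - p ^ 3) * n ≤ (#(Mk i) : ℝ)) :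
    (#(saturated c Mk (57 * p * t) A) : ℝ) ≤ p * t / 7 := by
  have hsat : saturated c Mk (57 * p * t) A =
      ({v | 57 * p * t - 1 < harm c Mk A v} : Finset (Vert n)) := by
    simp only [saturated, sub_lt_iff_lt_add]
  have hharm : ∑ v, (harm c Mk A v : ℝ) ≤ 4 * ∑ v, (missCount Mk v : ℝ) := by
    have h := hA.sum_harm_le hM hc
    calc ∑ v, (harm c Mk A v : ℝ) ≤ 4 * ∑ u ∈ bad Mk (40 * p * t), (missCount Mk u : ℝ) := by
          exact_mod_cast h
      _ ≤ 4 * ∑ v, (missCount Mk v : ℝ) := by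
          gcongr; exact subset_univ _
  have h := (card_filter_lt_mul_le_sum (harm c Mk A) (57 * p * t - 1)).trans hharm
  rw [← hsat] at h
  have hmiss := sum_missCount_le hp hpn hmt hM hsize
  refine le_of_mul_le_mul_right ?_ (by linarith : (0 : ℝ) < 56 * p * t)
  nlinarith [(Nat.cast_nonneg _ : (0 : ℝ) ≤ #(saturated c Mk (57 * p * t) A))]

lemma IsAugmentation.exists_extension
    (hA : IsAugmentation c Mk G (bad Mk (40 * p * t)) (57 * p * t) A) (hp : 0 < p)
    (hpt : 1 ≤ p * t) (hpn : p * n ≤ t) (hm : (m : ℝ) ≤ (1 - p) * t) (hG : ProperBipColouring G c)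
    (hdeg : ∀ v, t ≤ deg G v) (hM : ∀ i, IsBipMatching (Mk i)) (hc : ∀ i, Set.InjOn c (Mk i))
    (hsize : ∀ i, (1 - p ^ 3) * n ≤ (#(Mk i) : ℝ)) {i : Fin m} {v : Vert n}
    (hvB : v ∈ bad Mk (40 * p * t)) (hvM : v ∉ verts (Mk i)) (hvA : v ∉ verts (A i)) :
    ∃ A', IsAugmentation c Mk G (bad Mk (40 * p * t)) (57 * p * t) A' ∧ (∀ j, A j ⊆ A' j) ∧
      v ∈ verts (A' i) := by
  set S := bad Mk (40 * p * t) ∪ saturated c Mk (57 * p * t) A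
  have hmt : (m : ℝ) ≤ t := hm.trans (by nlinarith)
  have hB := card_bad_le hp hpt hpn hmt hM hsize
  have hsat := hA.card_saturated_le hp hpt hpn hmt hM hc hsize
  have hAi : (#(A i) : ℝ) ≤ #(bad Mk (40 * p * t)) :=
    Nat.cast_le.2 ((hA.card_le i).trans (card_filter_le _ _))
  have hS : (#S : ℝ) ≤ #(bad Mk (40 * p * t)) + #(saturated c Mk (57 * p * t) A) := by
    exact_mod_cast card_union_le _ _
  have hcount : m + 4 * #S + 3 * #(A i) ≤ deg G v := by
    refine le_trans ?_ (hdeg v)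
    exact_mod_cast (show (m + 4 * #S + 3 * #(A i) : ℝ) ≤ t by linarith)
  obtain ⟨e, he⟩ := hA.exists_isSafeEdge hM hG hvB hvM hvA hcount
  refine ⟨_, hA.update_insert hvB hvM hvA he, fun j => ?_, ?_⟩
  · rw [Function.update_apply]
    split_ifs with hj
    · exact hj ▸ subset_insert _ _
    · exact subset_rfl
  · exact mem_verts.2 ⟨e, by simp, he.mem_ends⟩

lemma IsAugmentation.le_deg_biUnion_repair
    (hA : IsAugmentation c Mk G (bad Mk (40 * p * t)) (57 * p * t) A)
    (hcov : ∀ i, ∀ v ∈ bad Mk (40 * p * t), v ∉ verts (Mk i) → v ∈ verts (A i)) (hp : 0 < p)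
    (hpt : 1 ≤ p * t) (hm : (1 - p) * t < m + 1) (hM : ∀ i, IsBipMatching (Mk i))
    (hdisj : ∀ i j, i ≠ j → Disjoint (Mk i) (Mk j)) (v : Vert n) :
    (1 - 101 * p) * t ≤ deg (univ.biUnion fun i => repair c (Mk i) (A i)) v := by
  rw [deg_biUnion (fun i => (hM i).repair (hA.matching i)) fun i j => hA.disjoint_repair hdisj]
  have hmiss := hA.card_filter_notMem_verts_repair_le (by positivity) hcov v
  have hsplit : (#{i | v ∈ verts (repair c (Mk i) (A i))} : ℝ) +
      #{i | v ∉ verts (repair c (Mk i) (A i))} = m := by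
    exact_mod_cast (card_filter_add_card_filter_not _).trans (card_fin m)
  nlinarith

lemma IsAugmentation.le_card_repair {B : Finset (Vert n)} {γ : ℝ}
    (hA : IsAugmentation c Mk G B γ A) (hp : 0 < p) (hp2 : p ≤ 1 / 2) {i : Fin m}
    (hM : IsBipMatching (Mk i)) (hc : Set.InjOn c (Mk i))
    (hsize : (1 - p ^ 3) * n ≤ (#(Mk i) : ℝ)) :
    (1 - 10 * p) * n ≤ (#(repair c (Mk i) (A i)) : ℝ) := by
  have h : 3 * (#(Mk i) : ℝ) ≤ #(repair c (Mk i) (A i)) + 2 * n := by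
    exact_mod_cast hA.three_mul_card_le_card_repair_add hM hc
  have hcube : 0 ≤ p * n * (10 - 3 * p ^ 2) := by
    have : 0 ≤ 10 - 3 * p ^ 2 := by nlinarith
    positivity
  nlinarith

end Estimates

end BipartiteRainbow

open BipartiteRainbow

/-- Spreading out a family of large edge-disjoint rainbow matchings:
from `t` edge-disjoint rainbow matchings of size `≥ (1-p³)n` in a properly coloured balanced
bipartite graph with minimum degree `≥ t` one gets `⌊(1-p)t⌋` edge-disjoint rainbow matchings
of size `≥ (1-10p)n` whose union has minimum degree `≥ (1-101p)t`. -/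
theorem statement_9 :
    ∀ (n t : ℕ) (p : ℝ), 0 < n → 0 < t →
      p * n ≤ (t : ℝ) → 1 ≤ p * t → 0 < p → p ≤ 1 / 2 →
      ∀ (G : Finset (Fin n × Fin n)) (c : Fin n × Fin n → ℕ),
        ProperBipColouring G c →
        (∀ x, t ≤ bdegX G x) → (∀ y, t ≤ bdegY G y) →
        ∀ M : Fin t → Finset (Fin n × Fin n),
          (∀ i, M i ⊆ G) →
          (∀ i, IsBipMatching (M i)) →
          (∀ i, Set.InjOn c ↑(M i)) →
          (∀ i j, i ≠ j → Disjoint (M i) (M j)) →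
          (∀ i, (1 - p ^ 3) * n ≤ ((M i).card : ℝ)) →
          ∃ M' : Fin ⌊(1 - p) * t⌋₊ → Finset (Fin n × Fin n),
            (∀ i, M' i ⊆ G) ∧
            (∀ i, IsBipMatching (M' i)) ∧
            (∀ i, Set.InjOn c ↑(M' i)) ∧
            (∀ i j, i ≠ j → Disjoint (M' i) (M' j)) ∧
            (∀ i, (1 - 10 * p) * n ≤ ((M' i).card : ℝ)) ∧
            (∀ x, (1 - 101 * p) * t ≤ (bdegX (Finset.univ.biUnion M') x : ℝ)) ∧
            (∀ y, (1 - 101 * p) * t ≤ (bdegY (Finset.univ.biUnion M') y : ℝ)) := by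
  intro n t p _ _ hpn hpt hp hp2 G c hG hdegX hdegY M hsub hM hc hdisj hsize
  set m := ⌊(1 - p) * t⌋₊
  have hm : (m : ℝ) ≤ (1 - p) * t := Nat.floor_le (by nlinarith)
  have hmt : m ≤ t := Nat.cast_le.1 (hm.trans (by nlinarith) : (m : ℝ) ≤ t)
  set Mk : Fin m → Finset (Fin n × Fin n) := fun i => M (Fin.castLE hmt i)
  have hdisjMk : ∀ i j, i ≠ j → Disjoint (Mk i) (Mk j) := fun i j hij =>
    hdisj _ _ ((Fin.castLE_injective hmt).ne hij)
  have hdeg : ∀ v, t ≤ deg G v := by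
    rintro (x | y)
    exacts [(deg_inl G x).symm ▸ hdegX x, (deg_inr G y).symm ▸ hdegY y]
  obtain ⟨A, hA, hcov⟩ := exists_isAugmentation_covering (by positivity)
    fun A hA i v hvB hvM hvA => hA.exists_extension hp hpt hpn hm hG hdeg (fun _ => hM _)
      (fun _ => hc _) (fun _ => hsize _) hvB hvM hvA
  have hdegRepair := hA.le_deg_biUnion_repair hcov hp hpt (Nat.lt_floor_add_one _) (fun _ => hM _)
    hdisjMk
  refine ⟨fun i => repair c (Mk i) (A i), fun i => ?_, fun i => (hM _).repair (hA.matching i),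
    fun i => injOn_repair (hA.disjoint_mk i i).symm (hc _) (hA.rainbow i),
    fun i j => hA.disjoint_repair hdisjMk,
    fun i => hA.le_card_repair hp hp2 (hM _) (hc _) (hsize _),
    fun x => ?_, fun y => ?_⟩
  · exact (repair_subset_union c _ _).trans (Finset.union_subset (hsub _) (hA.subset i))
  · simpa only [deg_inl] using hdegRepair (.inl x)
  · simpa only [deg_inr] using hdegRepair (.inr y)
end

section
/- Let γ, p > 0 and let H be a (γ, p, n)-typical graph. Then for all subsets A, B ⊆ V(H) with |B| ≥ γ^(−1)p^(−2), one has |e(A,B) − p·|A|·|B|| ≤ 2·|A|^(1/2)·|B|·γ^(1/2)·n^(1/2)·p, where e(A,B) denotes the number of ordered pairs (x, y) ∈ A × B such that xy is an edge of H. -/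
/-!
Write `d(x) = |N(x) ∩ B|`. Then `e(A,B) - p|A||B| = ∑_{x ∈ A} (d(x) - p|B|)`, whose square is at
most `|A| ∑_{x ∈ V} (d(x) - p|B|)²` by Cauchy–Schwarz. Double counting turns `∑ d(x)` and
`∑ d(x)²` into sums of degrees and codegrees of vertices of `B`, so typicality bounds this second
moment by `n|B| + 3γp²n|B|²`, which is at most `4γp²n|B|²` because `|B| ≥ γ⁻¹p⁻²`.
-/

open Finset

namespace SimpleGraph

variable {V : Type*} [Fintype V] [DecidableEq V] (G : SimpleGraph V) [DecidableRel G.Adj]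

theorem neighborFinset_inter_eq_filter (x : V) (B : Finset V) :
    G.neighborFinset x ∩ B = {y ∈ B | G.Adj x y} := by
  ext y; simp [and_comm]

theorem card_filter_adj_product_eq_sum (A B : Finset V) :
    #{q ∈ A ×ˢ B | G.Adj q.1 q.2} = ∑ x ∈ A, #(G.neighborFinset x ∩ B) := by
  simp_rw [card_filter, sum_product, neighborFinset_inter_eq_filter, card_filter]

theorem sum_card_neighborFinset_inter_eq_sum_degree (B : Finset V) :
    ∑ x, #(G.neighborFinset x ∩ B) = ∑ y ∈ B, G.degree y := by
  convert sum_card_bipartiteAbove_eq_sum_card_bipartiteBelow G.Adj (s := univ) (t := B) using 3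
  · exact G.neighborFinset_inter_eq_filter _ B
  · rw [← card_neighborFinset_eq_degree]; congr 1; ext x; simp [bipartiteBelow, adj_comm]

theorem sum_sq_card_neighborFinset_inter_eq_sum_codegree (B : Finset V) :
    ∑ x, #(G.neighborFinset x ∩ B) ^ 2 =
      ∑ y ∈ B, ∑ z ∈ B, #(G.neighborFinset y ∩ G.neighborFinset z) := by
  rw [← sum_product']
  convert sum_card_bipartiteAbove_eq_sum_card_bipartiteBelow
    (fun x (q : V × V) => G.Adj x q.1 ∧ G.Adj x q.2) (s := univ) (t := B ×ˢ B) using 2 with x _ q _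
  · rw [sq, ← card_product]
    congr 1; ext q; simp [bipartiteAbove]; tauto
  · congr 1; ext x; simp [adj_comm]

theorem sum_sum_codegree_le {B : Finset V} {c : ℝ} (hc : 0 ≤ c)
    (hcodeg : ∀ y z, y ≠ z → (#(G.neighborFinset y ∩ G.neighborFinset z) : ℝ) ≤ c) :
    ∑ y ∈ B, ∑ z ∈ B, (#(G.neighborFinset y ∩ G.neighborFinset z) : ℝ) ≤
      #B * (Fintype.card V + c * #B) := by
  rw [← nsmul_eq_mul, ← sum_const]
  refine sum_le_sum fun y hy => ?_
  -- the diagonal term `z = y` is a degree, bounded only by `|V|`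
  rw [← add_sum_erase _ _ hy, inter_self]
  gcongr
  · exact_mod_cast card_le_univ _
  · calc ∑ z ∈ B.erase y, (#(G.neighborFinset y ∩ G.neighborFinset z) : ℝ)
        ≤ ∑ z ∈ B.erase y, c := sum_le_sum fun z hz => hcodeg y z (ne_of_mem_erase hz).symm
      _ ≤ c * #B := by
        rw [sum_const, nsmul_eq_mul, mul_comm]
        gcongr
        exact erase_subset y B

theorem sum_sq_card_neighborFinset_inter_sub (B : Finset V) (t : ℝ) :
    ∑ x, ((#(G.neighborFinset x ∩ B) : ℝ) - t) ^ 2 =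
      ∑ y ∈ B, ∑ z ∈ B, (#(G.neighborFinset y ∩ G.neighborFinset z) : ℝ)
        - 2 * t * ∑ y ∈ B, (G.degree y : ℝ) + Fintype.card V * t ^ 2 := by
  have hsq : ∑ x, (#(G.neighborFinset x ∩ B) : ℝ) ^ 2 =
      ∑ y ∈ B, ∑ z ∈ B, (#(G.neighborFinset y ∩ G.neighborFinset z) : ℝ) := by
    exact_mod_cast G.sum_sq_card_neighborFinset_inter_eq_sum_codegree B
  have hsum : ∑ x, (#(G.neighborFinset x ∩ B) : ℝ) = ∑ y ∈ B, (G.degree y : ℝ) := by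
    exact_mod_cast G.sum_card_neighborFinset_inter_eq_sum_degree B
  simp only [sub_sq, sum_add_distrib, sum_sub_distrib, ← sum_mul, ← mul_sum, hsq, hsum,
    sum_const, card_univ, nsmul_eq_mul]
  ring

theorem sum_sq_card_neighborFinset_inter_sub_le {B : Finset V} {γ p : ℝ} (hp : 0 ≤ p)
    (hdeg : ∀ v, (1 - γ) * (p * Fintype.card V) ≤ G.degree v)
    (hcodeg : ∀ y z, y ≠ z →
      (#(G.neighborFinset y ∩ G.neighborFinset z) : ℝ) ≤ (1 + γ) * (p ^ 2 * Fintype.card V))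
    (hB : 1 ≤ γ * p ^ 2 * #B) :
    ∑ x, ((#(G.neighborFinset x ∩ B) : ℝ) - p * #B) ^ 2 ≤
      4 * γ * p ^ 2 * Fintype.card V * #B ^ 2 := by
  set b : ℝ := (#B : ℝ)
  set n : ℝ := (Fintype.card V : ℝ)
  have hγ : 0 < γ := by
    by_contra! h
    nlinarith [mul_nonpos_of_nonpos_of_nonneg h (by positivity : 0 ≤ p ^ 2 * b)]
  have hcod := G.sum_sum_codegree_le (B := B) (by positivity) hcodeg
  have hdegsum : b * ((1 - γ) * (p * n)) ≤ ∑ y ∈ B, (G.degree y : ℝ) := by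
    simpa [mul_comm] using card_nsmul_le_sum B (fun y => (G.degree y : ℝ)) _ fun y _ => hdeg y
  have hbn : b * n ≤ γ * p ^ 2 * n * b ^ 2 := by
    nlinarith [mul_le_mul_of_nonneg_left hB (by positivity : 0 ≤ b * n)]
  rw [sum_sq_card_neighborFinset_inter_sub]
  nlinarith [mul_le_mul_of_nonneg_left hdegsum (by positivity : 0 ≤ 2 * p * b)]

end SimpleGraph

theorem sq_sum_le_card_mul_sum_univ_sq {ι : Type*} [Fintype ι] (A : Finset ι) (f : ι → ℝ) :
    (∑ x ∈ A, f x) ^ 2 ≤ #A * ∑ x, f x ^ 2 := by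
  calc (∑ x ∈ A, f x) ^ 2 ≤ #A * ∑ x ∈ A, f x ^ 2 := sq_sum_le_card_mul_sum_sq
    _ ≤ #A * ∑ x, f x ^ 2 := by
      gcongr
      exact subset_univ A

/-- Discrepancy in typical graphs: if `H` is `(γ, p, n)`-typical (degrees
`(1±γ)pn`, codegrees `(1±γ)p²n` on `n` vertices) then for all vertex sets `A`, `B` with
`|B| ≥ γ⁻¹p⁻²` we have `|e(A,B) − p|A||B|| ≤ 2·√|A|·|B|·√γ·√n·p`, where `e(A,B)` counts
ordered pairs `(x,y) ∈ A × B` with `xy` an edge of `H`. -/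
theorem statement_16 :
    ∀ (n : ℕ) (γ p : ℝ), 0 < γ → 0 < p →
    ∀ (H : SimpleGraph (Fin n)) [inst : DecidableRel H.Adj],
      (∀ v, (1 - γ) * (p * n) ≤ (H.degree v : ℝ) ∧ (H.degree v : ℝ) ≤ (1 + γ) * (p * n)) →
      (∀ u v : Fin n, u ≠ v →
        (1 - γ) * (p ^ 2 * n) ≤ ((H.neighborFinset u ∩ H.neighborFinset v).card : ℝ) ∧
        ((H.neighborFinset u ∩ H.neighborFinset v).card : ℝ) ≤ (1 + γ) * (p ^ 2 * n)) →
      ∀ A B : Finset (Fin n), γ⁻¹ * (p ^ 2)⁻¹ ≤ (B.card : ℝ) →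
        |(((A ×ˢ B).filter (fun q => H.Adj q.1 q.2)).card : ℝ) - p * A.card * B.card| ≤
          2 * Real.sqrt (A.card) * B.card * Real.sqrt γ * Real.sqrt n * p := by
  intro n γ p hγ hp H _ hdeg hcodeg A B hBcard
  have hB : 1 ≤ γ * p ^ 2 * #B := by
    rw [← inv_mul_le_iff₀ (by positivity), mul_inv, mul_one]
    exact hBcard
  have hvar := H.sum_sq_card_neighborFinset_inter_sub_le hp.le
    (by simpa using fun v => (hdeg v).1) (by simpa using fun u v h => (hcodeg u v h).2) hB
  rw [Fintype.card_fin] at hvar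
  have hdisc : (((A ×ˢ B).filter (fun q => H.Adj q.1 q.2)).card : ℝ) - p * #A * #B =
      ∑ x ∈ A, ((#(H.neighborFinset x ∩ B) : ℝ) - p * #B) := by
    rw [H.card_filter_adj_product_eq_sum, sum_sub_distrib, sum_const, nsmul_eq_mul]
    push_cast
    ring
  rw [hdisc]
  refine abs_le_of_sq_le_sq ?_ (by positivity)
  calc (∑ x ∈ A, ((#(H.neighborFinset x ∩ B) : ℝ) - p * #B)) ^ 2
      ≤ #A * ∑ x, ((#(H.neighborFinset x ∩ B) : ℝ) - p * #B) ^ 2 :=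
        sq_sum_le_card_mul_sum_univ_sq A _
    _ ≤ #A * (4 * γ * p ^ 2 * n * #B ^ 2) := by gcongr
    _ = (2 * √(#A : ℝ) * #B * √γ * √(n : ℝ) * p) ^ 2 := by
        simp only [mul_pow, Real.sq_sqrt (Nat.cast_nonneg _), Real.sq_sqrt hγ.le]
        ring
end

section
/- Let G be a properly edge-coloured graph on n vertices and b ≥ 1 an integer. Suppose: T is a rainbow tree in G with exactly n−1 vertices; v is the vertex of G outside V(T) and v has degree at least n/2 + b in G; c is a colour not appearing on T such that G has at least b edges of colour c; and H is a subgraph of G with vertex set contained in V(T), edge-disjoint from T, such that for every set S of b colours from C(T), at least n − 2b vertices are covered by edges of H whose colour lies in S. Then there is a rainbow tree T′ whose edges all lie in E(T) ∪ E(H) ∪ E(c) ∪ E(v), with V(T′) = V(T) ∪ {v}, with at most 3 edges of T′ outside E(T), and with v having degree exactly 1 in T′. -/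
/-!
Let `T` be the rainbow tree on `V ∖ {v}`. If an edge `vu` has a colour missing from `T`, attach
`v` by it. Otherwise every colour at `v` occurs on `T`; call the tree edges carrying these colours
*good*. By properness there are at least `deg v ≥ n/2 + b` good edges.

If a good edge `g` separates (in `T - g`) the ends of an edge `f` of colour `c₀`, exchange `g` for
`f` and attach `v` by the edge of colour `c(g)`. Otherwise take `b` edges of colour `c₀`: they form
a matching, and each of its `2b` vertices lies on a tree edge separating the ends of its matching
edge, so at least `b` tree edges `e` are separated by such an `f`; let `S` be their colours. If a
good edge `g` separates the ends of an edge `h` of `H` with `c(h) = c(e) ∈ S`, exchange `e` for `f`,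
then `g` for `h`, and attach `v`. If there is no such `h`, every vertex covered by the `S`-coloured
edges of `H` lies on a tree edge that is not good, so at most `2(n - 2 - deg v) < n - 2b` vertices
are covered, contradicting the hypothesis.
-/

open SimpleGraph Finset

variable {V : Type*}

abbrev edgeGraph (A : Finset (Sym2 V)) : SimpleGraph V := fromEdgeSet (A : Set (Sym2 V))

section Reachability

variable {A B : Finset (Sym2 V)} {a b p q x y : V}

lemma edgeGraph_adj_of_mem (h : s(x, y) ∈ A) (hxy : x ≠ y) : (edgeGraph A).Adj x y :=
  (fromEdgeSet_adj _).mpr ⟨mem_coe.mpr h, hxy⟩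

lemma edgeGraph_reachable_mono (hAB : A ⊆ B) (h : (edgeGraph A).Reachable x y) :
    (edgeGraph B).Reachable x y :=
  h.mono (fromEdgeSet_mono (coe_subset.mpr hAB))

lemma eq_of_edgeGraph_reachable (hx : ∀ e ∈ A, x ∉ e) (h : (edgeGraph A).Reachable x y) :
    x = y := by
  obtain ⟨_ | ⟨hadj, _⟩⟩ := h
  · rfl
  · exact absurd (Sym2.mem_mk_left _ _) (hx _ (mem_coe.mp ((fromEdgeSet_adj _).mp hadj).1))

variable [DecidableEq V]

lemma edgeGraph_reachable_insert (h : (edgeGraph (insert s(p, q) A)).Reachable a b) :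
    (edgeGraph A).Reachable a b ∨
      ((edgeGraph A).Reachable a p ∧ (edgeGraph A).Reachable q b) ∨
      ((edgeGraph A).Reachable a q ∧ (edgeGraph A).Reachable p b) := by
  obtain ⟨w⟩ := h
  induction w with
  | nil => exact .inl .rfl
  | @cons a z b hadj _ ih =>
    obtain ⟨hmem, hne⟩ := (fromEdgeSet_adj _).mp hadj
    rcases mem_insert.mp (mem_coe.mp hmem) with heq | hmem
    · rcases Sym2.eq_iff.mp heq with ⟨rfl, rfl⟩ | ⟨rfl, rfl⟩ <;>
        rcases ih with h | ⟨_, h⟩ | ⟨_, h⟩ <;> simp [h]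
    · have haz := (edgeGraph_adj_of_mem hmem hne).reachable
      rcases ih with h | ⟨h, h'⟩ | ⟨h, h'⟩
      · exact .inl (haz.trans h)
      · exact .inr (.inl ⟨haz.trans h, h'⟩)
      · exact .inr (.inr ⟨haz.trans h, h'⟩)

lemma edgeGraph_reachable_of_insert (hAB : A ⊆ B) (hpq : (edgeGraph B).Reachable p q)
    (h : (edgeGraph (insert s(p, q) A)).Reachable a b) : (edgeGraph B).Reachable a b := by
  have mono {x y : V} := edgeGraph_reachable_mono (x := x) (y := y) hAB
  rcases edgeGraph_reachable_insert h with h | ⟨h, h'⟩ | ⟨h, h'⟩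
  · exact mono h
  · exact (mono h).trans (hpq.trans (mono h'))
  · exact (mono h).trans (hpq.symm.trans (mono h'))

lemma edgeGraph_isAcyclic_insert (hA : (edgeGraph A).IsAcyclic)
    (hxy : ¬ (edgeGraph A).Reachable x y) : (edgeGraph (insert s(x, y) A)).IsAcyclic := by
  have : edgeGraph (insert s(x, y) A) = edgeGraph A ⊔ edge x y := by
    rw [edgeGraph, coe_insert, Set.insert_eq, fromEdgeSet_union, sup_comm, edge]
  exact this ▸ hA.sup_edge_of_not_reachable hxy

lemma edgeGraph_erase (e : Sym2 V) : edgeGraph (A.erase e) = (edgeGraph A).deleteEdges {e} := by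
  rw [deleteEdges_fromEdgeSet, ← coe_singleton, ← coe_sdiff, sdiff_singleton_eq_erase]

lemma edgeGraph_not_reachable_erase (hA : (edgeGraph A).IsAcyclic) (h : s(x, y) ∈ A)
    (hxy : x ≠ y) : ¬ (edgeGraph (A.erase s(x, y))).Reachable x y :=
  edgeGraph_erase (A := A) _ ▸ isAcyclic_iff_forall_adj_isBridge.mp hA (edgeGraph_adj_of_mem h hxy)

lemma exists_mem_not_edgeGraph_reachable_erase (hA : (edgeGraph A).IsAcyclic)
    (h : (edgeGraph A).Reachable x y) (hxy : x ≠ y) :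
    ∃ g ∈ A, x ∈ g ∧ ¬ (edgeGraph (A.erase g)).Reachable x y := by
  obtain ⟨p, hp⟩ := h.exists_isPath
  cases p with
  | nil => exact absurd rfl hxy
  | @cons _ t _ hadj q =>
    have hmem : s(x, t) ∈ A := mem_coe.mp ((fromEdgeSet_adj _).mp hadj).1
    refine ⟨s(x, t), hmem, Sym2.mem_mk_left _ _, fun hreach => ?_⟩
    have hq : s(x, t) ∉ q.edges := ((Walk.isTrail_cons _ _).mp hp.isTrail).2
    have hty : (edgeGraph (A.erase s(x, t))).Reachable t y :=
      edgeGraph_erase (A := A) _ ▸ (q.toDeleteEdge _ hq).reachable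
    exact edgeGraph_not_reachable_erase hA hmem hadj.ne (hreach.trans hty.symm)

end Reachability

section SpanningTreeExcept

variable [DecidableEq V] {A : Finset (Sym2 V)} {g : Sym2 V} {u v x y : V}

structure IsSpanningTreeExcept (A : Finset (Sym2 V)) (v : V) : Prop where
  notMem : ∀ e ∈ A, v ∉ e
  reachable : ∀ x y, x ≠ v → y ≠ v → (edgeGraph A).Reachable x y
  isAcyclic : (edgeGraph A).IsAcyclic

lemma IsSpanningTreeExcept.exchange (hA : IsSpanningTreeExcept A v) (hg : g ∈ A) (hx : x ≠ v)
    (hy : y ≠ v) (hsep : ¬ (edgeGraph (A.erase g)).Reachable x y) :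
    IsSpanningTreeExcept (insert s(x, y) (A.erase g)) v where
  notMem e he := by
    rcases mem_insert.mp he with rfl | he
    · simp [hx.symm, hy.symm]
    · exact hA.notMem e (mem_of_mem_erase he)
  reachable a b ha hb := by
    obtain ⟨p, q⟩ := g
    set A' := insert s(x, y) (A.erase s(p, q))
    have hsub : A.erase s(p, q) ⊆ A' := subset_insert _ _
    have hreach (a₁ a₂ : V) (h₁ : a₁ ≠ v) (h₂ : a₂ ≠ v) :
        (edgeGraph (insert s(p, q) (A.erase s(p, q)))).Reachable a₁ a₂ := by
      rw [insert_erase hg]; exact hA.reachable a₁ a₂ h₁ h₂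
    have hne : x ≠ y := by rintro rfl; exact hsep .rfl
    have hxy : (edgeGraph A').Reachable x y :=
      (edgeGraph_adj_of_mem (mem_insert_self _ _) hne).reachable
    have hpq : (edgeGraph A').Reachable p q := by
      rcases edgeGraph_reachable_insert (hreach x y hx hy) with h | ⟨h, h'⟩ | ⟨h, h'⟩
      · exact absurd h hsep
      · exact (edgeGraph_reachable_mono hsub h).symm.trans
          (hxy.trans (edgeGraph_reachable_mono hsub h').symm)
      · exact (edgeGraph_reachable_mono hsub h').trans
          (hxy.symm.trans (edgeGraph_reachable_mono hsub h))
    exact edgeGraph_reachable_of_insert hsub hpq (hreach a b ha hb)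
  isAcyclic :=
    edgeGraph_isAcyclic_insert (hA.isAcyclic.anti (fromEdgeSet_mono (by simp))) hsep

lemma IsSpanningTreeExcept.isTree_insert (hA : IsSpanningTreeExcept A v) (hu : u ≠ v) :
    (edgeGraph (insert s(v, u) A)).IsTree := by
  have : Nonempty V := ⟨v⟩
  have hreach (a : V) : (edgeGraph (insert s(v, u) A)).Reachable a u := by
    obtain rfl | ha := eq_or_ne a v
    · exact (edgeGraph_adj_of_mem (mem_insert_self _ _) hu.symm).reachable
    · exact edgeGraph_reachable_mono (subset_insert _ _) (hA.reachable a u ha hu)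
  exact ⟨⟨fun a b => (hreach a).trans (hreach b).symm⟩,
    edgeGraph_isAcyclic_insert hA.isAcyclic
      fun h => hu (eq_of_edgeGraph_reachable hA.notMem h).symm⟩

lemma IsSpanningTreeExcept.card_add_two [Fintype V] (hA : IsSpanningTreeExcept A v)
    (hdiag : ∀ e ∈ A, ¬ e.IsDiag) (hu : u ≠ v) : #A + 2 = Fintype.card V := by
  have hedges : (edgeGraph (insert s(v, u) A)).edgeFinset = insert s(v, u) A := by
    ext e
    simp only [mem_edgeFinset, edgeSet_fromEdgeSet, Set.mem_sdiff, mem_coe, Sym2.mem_diagSet,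
      and_iff_left_iff_imp]
    rintro he
    rcases mem_insert.mp he with rfl | he
    · simpa using hu.symm
    · exact hdiag e he
  have hv : s(v, u) ∉ A := fun h => hA.notMem _ h (Sym2.mem_mk_left _ _)
  have := (hA.isTree_insert hu).card_edgeFinset
  rw [hedges, card_insert_of_notMem hv] at this
  omega

lemma IsSpanningTreeExcept.filter_mem_insert (hA : IsSpanningTreeExcept A v) :
    (insert s(v, u) A).filter (v ∈ ·) = {s(v, u)} := by
  ext e
  simp only [mem_filter, mem_insert, mem_singleton]
  constructor
  · rintro ⟨rfl | he, hv⟩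
    · rfl
    · exact absurd hv (hA.notMem e he)
  · rintro rfl
    simp

end SpanningTreeExcept

section EdgeVerts

variable [DecidableEq V]

def edgeVerts (B : Finset (Sym2 V)) : Finset V := B.biUnion Sym2.toFinset

lemma mem_edgeVerts {B : Finset (Sym2 V)} {x : V} : x ∈ edgeVerts B ↔ ∃ e ∈ B, x ∈ e := by
  simp [edgeVerts, Sym2.mem_toFinset]

lemma card_edgeVerts_le (B : Finset (Sym2 V)) : #(edgeVerts B) ≤ 2 * #B := by
  calc #(edgeVerts B) ≤ ∑ e ∈ B, #e.toFinset := card_biUnion_le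
    _ ≤ ∑ _e ∈ B, 2 := sum_le_sum fun e _ => by rw [Sym2.card_toFinset]; split_ifs <;> simp
    _ = 2 * #B := by rw [sum_const, smul_eq_mul, mul_comm]

lemma card_edgeVerts_of_pairwiseDisjoint {B : Finset (Sym2 V)} (hdiag : ∀ e ∈ B, ¬ e.IsDiag)
    (hdisj : (B : Set (Sym2 V)).PairwiseDisjoint Sym2.toFinset) : #(edgeVerts B) = 2 * #B := by
  rw [edgeVerts, card_biUnion hdisj,
    sum_congr rfl fun e he => Sym2.card_toFinset_of_not_isDiag e (hdiag e he), sum_const,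
    smul_eq_mul, mul_comm]

lemma IsSpanningTreeExcept.edgeVerts_subset {A B P : Finset (Sym2 V)} {v : V}
    (hA : IsSpanningTreeExcept A v) (hB : ∀ e ∈ B, v ∉ e ∧ ¬ e.IsDiag)
    (hP : ∀ g ∈ A, ∀ x y, s(x, y) ∈ B → ¬ (edgeGraph (A.erase g)).Reachable x y → g ∈ P) :
    edgeVerts B ⊆ edgeVerts P := by
  intro x hx
  obtain ⟨e, he, hxe⟩ := mem_edgeVerts.mp hx
  obtain ⟨y, rfl⟩ := Sym2.mem_iff_exists.mp hxe
  obtain ⟨hv, hdiag⟩ := hB _ he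
  have hxy : x ≠ y := by simpa using hdiag
  have hxv : x ≠ v := by rintro rfl; simp at hv
  have hyv : y ≠ v := by rintro rfl; simp at hv
  obtain ⟨g, hg, hxg, hsep⟩ :=
    exists_mem_not_edgeGraph_reachable_erase hA.isAcyclic (hA.reachable x y hxv hyv) hxy
  exact mem_edgeVerts.mpr ⟨g, hP g hg x y he hsep, hxg⟩

lemma filter_exists_mem_and_eq_edgeVerts [Fintype V] (B : Finset (Sym2 V)) (p : Sym2 V → Prop)
    [DecidablePred p] :
    univ.filter (fun x => ∃ e ∈ B, x ∈ e ∧ p e) = edgeVerts (B.filter p) := by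
  ext x
  simp only [mem_filter, mem_univ, true_and, mem_edgeVerts]
  exact ⟨fun ⟨e, he, hx, hp⟩ => ⟨e, ⟨he, hp⟩, hx⟩, fun ⟨e, ⟨he, hp⟩, hx⟩ => ⟨e, he, hx, hp⟩⟩

end EdgeVerts

section FinsetImage

variable {α κ : Type*} [DecidableEq κ] {c : α → κ} {A : Finset α} {a : α}

lemma card_le_card_filter_of_subset_image {K : Finset κ} (hK : K ⊆ A.image c) :
    #K ≤ #(A.filter (c · ∈ K)) := by
  refine (card_le_card (t := (A.filter (c · ∈ K)).image c) fun k hk => ?_).trans card_image_le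
  obtain ⟨e, he, rfl⟩ := mem_image.mp (hK hk)
  exact mem_image_of_mem c (mem_filter.mpr ⟨he, hk⟩)

variable [DecidableEq α]

lemma injOn_insert_of_notMem_image (hA : Set.InjOn c A) (ha : c a ∉ A.image c) :
    Set.InjOn c ↑(insert a A) := by
  rw [coe_insert, Set.injOn_insert fun h => ha (mem_image_of_mem c h)]
  exact ⟨hA, by simpa using ha⟩

lemma notMem_image_erase_of_injOn (hA : Set.InjOn c A) (ha : a ∈ A) :
    c a ∉ (A.erase a).image c := by
  simp only [mem_image, mem_erase, not_exists, not_and]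
  exact fun b ⟨hba, hb⟩ hc => hba (hA hb ha hc)

lemma card_sdiff_le_two {s t : Finset α} {a b : α}
    (h : s ⊆ insert a (insert b t)) : #(s \ t) ≤ 2 := by
  refine (card_le_card (t := {a, b}) fun x hx => ?_).trans card_le_two
  obtain ⟨hs, ht⟩ := mem_sdiff.mp hx
  have := h hs
  simp only [mem_insert, mem_singleton] at this ⊢
  tauto

end FinsetImage

section RainbowTree

variable [DecidableEq V] {κ : Type*} [DecidableEq κ] {c : Sym2 V → κ} {A : Finset (Sym2 V)}
  {g e : Sym2 V} {v x y w z : V}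

structure IsRainbowTreeExcept (c : Sym2 V → κ) (A : Finset (Sym2 V)) (v : V) : Prop
    extends IsSpanningTreeExcept A v where
  injOn : Set.InjOn c A

lemma IsRainbowTreeExcept.exchange (hA : IsRainbowTreeExcept c A v) (hg : g ∈ A) (hx : x ≠ v)
    (hy : y ≠ v) (hsep : ¬ (edgeGraph (A.erase g)).Reachable x y)
    (hcol : c s(x, y) ∉ (A.erase g).image c) :
    IsRainbowTreeExcept c (insert s(x, y) (A.erase g)) v where
  toIsSpanningTreeExcept := hA.toIsSpanningTreeExcept.exchange hg hx hy hsep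
  injOn := injOn_insert_of_notMem_image (hA.injOn.mono (by simp)) hcol

lemma IsRainbowTreeExcept.exchange_of_notMem_image (hA : IsRainbowTreeExcept c A v) (hg : g ∈ A)
    (hx : x ≠ v) (hy : y ≠ v) (hsep : ¬ (edgeGraph (A.erase g)).Reachable x y)
    (hcol : c s(x, y) ∉ A.image c) :
    IsRainbowTreeExcept c (insert s(x, y) (A.erase g)) v ∧
      c g ∉ (insert s(x, y) (A.erase g)).image c := by
  refine ⟨hA.exchange hg hx hy hsep fun h => hcol (image_subset_image (erase_subset _ _) h), ?_⟩
  rw [image_insert, mem_insert, not_or]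
  exact ⟨fun h => hcol (h ▸ mem_image_of_mem c hg), notMem_image_erase_of_injOn hA.injOn hg⟩

lemma IsRainbowTreeExcept.exchange_twice (hA : IsRainbowTreeExcept c A v) (hg : g ∈ A)
    (he : e ∈ A) (hx : x ≠ v) (hy : y ≠ v) (hw : w ≠ v) (hz : z ≠ v)
    (hcol : c s(x, y) ∉ A.image c) (hsep : ¬ (edgeGraph (A.erase e)).Reachable x y)
    (hreach : (edgeGraph (A.erase g)).Reachable x y) (hce : c s(w, z) = c e)
    (hsep' : ¬ (edgeGraph (A.erase g)).Reachable w z) :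
    IsRainbowTreeExcept c (insert s(w, z) ((insert s(x, y) (A.erase e)).erase g)) v ∧
      c g ∉ (insert s(w, z) ((insert s(x, y) (A.erase e)).erase g)).image c := by
  have hge : g ≠ e := by rintro rfl; exact hsep hreach
  obtain ⟨hA₁, he₁⟩ := hA.exchange_of_notMem_image he hx hy hsep hcol
  have hg₁ : g ∈ insert s(x, y) (A.erase e) := mem_insert_of_mem (mem_erase.mpr ⟨hge, hg⟩)
  -- `g` does not separate `x` from `y`, so adding `xy` to `A - e - g` joins nothing that `A - g`
  -- does not already join.
  have hsep₁ : ¬ (edgeGraph ((insert s(x, y) (A.erase e)).erase g)).Reachable w z := fun h =>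
    hsep' (edgeGraph_reachable_of_insert subset_rfl hreach
      (edgeGraph_reachable_mono (by grind) h))
  refine ⟨hA₁.exchange hg₁ hw hz hsep₁
    (hce ▸ fun h => he₁ (image_subset_image (erase_subset _ _) h)), ?_⟩
  rw [image_insert, mem_insert, not_or, hce]
  exact ⟨fun h => hge (hA.injOn hg he h), notMem_image_erase_of_injOn hA₁.injOn hg₁⟩

end RainbowTree

section Colouring

variable {κ : Type*}

def IsProperEdgeColouring (G : SimpleGraph V) (c : Sym2 V → κ) : Prop :=
  ∀ e ∈ G.edgeSet, ∀ f ∈ G.edgeSet, e ≠ f → (∃ u, u ∈ e ∧ u ∈ f) → c e ≠ c f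

variable [DecidableEq V] {G : SimpleGraph V} {c : Sym2 V → κ}

lemma IsProperEdgeColouring.pairwiseDisjoint (hc : IsProperEdgeColouring G c) {B : Finset (Sym2 V)}
    {k : κ} (hB : ∀ e ∈ B, e ∈ G.edgeSet ∧ c e = k) :
    (B : Set (Sym2 V)).PairwiseDisjoint Sym2.toFinset := by
  intro e he f hf hne
  exact disjoint_left.mpr fun x hxe hxf => hc e (hB e he).1 f (hB f hf).1 hne
    ⟨x, Sym2.mem_toFinset.mp hxe, Sym2.mem_toFinset.mp hxf⟩ ((hB e he).2.trans (hB f hf).2.symm)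

variable [DecidableEq κ]

def coloursAt (G : SimpleGraph V) (c : Sym2 V → κ) (v : V) [Fintype (G.neighborSet v)] :
    Finset κ :=
  (G.neighborFinset v).image fun u => c s(v, u)

lemma IsProperEdgeColouring.card_coloursAt (hc : IsProperEdgeColouring G c) (v : V)
    [Fintype (G.neighborSet v)] : #(coloursAt G c v) = G.degree v := by
  rw [coloursAt, card_image_of_injOn, card_neighborFinset_eq_degree]
  intro u hu u' hu' hcol
  by_contra hne
  rw [mem_coe, mem_neighborFinset] at hu hu'
  exact hc _ hu _ hu' (fun h => hne (Sym2.congr_right.mp h))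
    ⟨v, Sym2.mem_mk_left _ _, Sym2.mem_mk_left _ _⟩ hcol

end Colouring

section Extension

variable [DecidableEq V] {κ : Type*} [DecidableEq κ] {G : SimpleGraph V} {c : Sym2 V → κ}
  {TE HE : Finset (Sym2 V)} {v u : V} {c₀ : κ} {b : ℕ} {g e : Sym2 V} {x y w z : V}

lemma exists_colours_separating (hc : IsProperEdgeColouring G c) (hT : IsRainbowTreeExcept c TE v)
    {F : Finset (Sym2 V)} (hF : ∀ e ∈ F, e ∈ G.edgeSet ∧ c e = c₀ ∧ v ∉ e) (hb : b ≤ #F) :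
    ∃ S ⊆ TE.image c, #S = b ∧ ∀ k ∈ S, ∃ g ∈ TE, c g = k ∧
      ∃ x y, s(x, y) ∈ F ∧ ¬ (edgeGraph (TE.erase g)).Reachable x y := by
  classical
  obtain ⟨Fb, hFb, hFbcard⟩ := exists_subset_card_eq hb
  set P := TE.filter fun g => ∃ x y, s(x, y) ∈ Fb ∧ ¬ (edgeGraph (TE.erase g)).Reachable x y
  have hdiag (e) (he : e ∈ Fb) : ¬ e.IsDiag := G.not_isDiag_of_mem_edgeSet (hF e (hFb he)).1
  have hP : b ≤ #P := by
    have hsub := hT.edgeVerts_subset (B := Fb) (P := P)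
      (fun e he => ⟨(hF e (hFb he)).2.2, hdiag e he⟩)
      (fun g hg x y hxy hsep => mem_filter.mpr ⟨hg, x, y, hxy, hsep⟩)
    have hFbverts := card_edgeVerts_of_pairwiseDisjoint hdiag
      (hc.pairwiseDisjoint fun e he => ⟨(hF e (hFb he)).1, (hF e (hFb he)).2.1⟩)
    have := card_le_card hsub
    have := card_edgeVerts_le P
    omega
  obtain ⟨Pb, hPb, hPbcard⟩ := exists_subset_card_eq hP
  have hPbT : Pb ⊆ TE := hPb.trans (filter_subset _ _)
  refine ⟨Pb.image c, image_subset_image hPbT, ?_, fun k hk => ?_⟩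
  · rw [card_image_of_injOn (hT.injOn.mono (coe_subset.mpr hPbT)), hPbcard]
  · obtain ⟨g, hg, rfl⟩ := mem_image.mp hk
    obtain ⟨hgT, x, y, hxy, hsep⟩ := mem_filter.mp (hPb hg)
    exact ⟨g, hgT, rfl, x, y, hFb hxy, hsep⟩

lemma card_edgeVerts_le_of_forall_reachable (hT : IsSpanningTreeExcept TE v)
    {B : Finset (Sym2 V)} (hB : ∀ e ∈ B, v ∉ e ∧ ¬ e.IsDiag) {K : Finset κ}
    (hK : ∀ g ∈ TE, c g ∈ K → ∀ x y, s(x, y) ∈ B → (edgeGraph (TE.erase g)).Reachable x y) :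
    #(edgeVerts B) ≤ 2 * #(TE.filter (c · ∉ K)) := by
  refine (card_le_card (hT.edgeVerts_subset hB fun g hg x y hxy hsep => ?_)).trans
    (card_edgeVerts_le _)
  exact mem_filter.mpr ⟨hg, fun hgK => hsep (hK g hg hgK x y hxy)⟩

/-- Attaching `v` to `A` by the edge `vu` gives the tree sought in the main theorem. -/
def IsExtensionBase (G : SimpleGraph V) (c : Sym2 V → κ) (TE HE : Finset (Sym2 V)) (c₀ : κ)
    (v u : V) (A : Finset (Sym2 V)) : Prop :=
  G.Adj v u ∧ IsRainbowTreeExcept c A v ∧ c s(v, u) ∉ A.image c ∧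
    (∀ e ∈ A, e ∈ TE ∨ e ∈ HE ∨ (e ∈ G.edgeSet ∧ c e = c₀)) ∧ #(A \ TE) ≤ 2

lemma IsExtensionBase.insert {A : Finset (Sym2 V)}
    (hA : IsExtensionBase G c TE HE c₀ v u A) (hTv : ∀ e ∈ TE, v ∉ e) :
    (∀ e ∈ insert s(v, u) A, e ∈ TE ∨ e ∈ HE ∨ (e ∈ G.edgeSet ∧ c e = c₀) ∨
      (e ∈ G.edgeSet ∧ v ∈ e)) ∧
    (edgeGraph (insert s(v, u) A)).IsTree ∧ Set.InjOn c ↑(insert s(v, u) A) ∧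
    #(insert s(v, u) A \ TE) ≤ 3 ∧ #((insert s(v, u) A).filter (v ∈ ·)) = 1 := by
  obtain ⟨hu, hA, hcol, hsrc, hcard⟩ := hA
  refine ⟨fun e he => ?_, hA.isTree_insert hu.ne', injOn_insert_of_notMem_image hA.injOn hcol,
    ?_, by rw [hA.filter_mem_insert, card_singleton]⟩
  · rcases mem_insert.mp he with rfl | he
    · exact .inr (.inr (.inr ⟨hu, Sym2.mem_mk_left _ _⟩))
    · rcases hsrc e he with h | h | h <;> simp [h]
  · rw [insert_sdiff_of_notMem _ fun h => hTv _ h (Sym2.mem_mk_left _ _)]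
    exact (card_insert_le _ _).trans (by omega)

lemma isExtensionBase_exchange (hT : IsRainbowTreeExcept c TE v) (hc₀ : c₀ ∉ TE.image c)
    (hu : G.Adj v u) (hg : g ∈ TE) (hcu : c s(v, u) = c g) (hxy : s(x, y) ∈ G.edgeSet)
    (hcxy : c s(x, y) = c₀) (hv : v ∉ s(x, y))
    (hsep : ¬ (edgeGraph (TE.erase g)).Reachable x y) :
    IsExtensionBase G c TE HE c₀ v u (insert s(x, y) (TE.erase g)) := by
  obtain ⟨hx, hy⟩ : x ≠ v ∧ y ≠ v := by simpa [eq_comm] using hv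
  obtain ⟨hA, hcol⟩ := hT.exchange_of_notMem_image hg hx hy hsep (hcxy ▸ hc₀)
  refine ⟨hu, hA, hcu ▸ hcol, fun e he => ?_, card_sdiff_le_two (a := s(x, y)) (b := s(x, y)) ?_⟩
  · rcases mem_insert.mp he with rfl | he
    · exact .inr (.inr ⟨hxy, hcxy⟩)
    · exact .inl (mem_of_mem_erase he)
  · exact insert_subset_insert _ ((erase_subset _ _).trans (subset_insert _ _))

lemma isExtensionBase_exchange_twice (hT : IsRainbowTreeExcept c TE v) (hc₀ : c₀ ∉ TE.image c)
    (hu : G.Adj v u) (hg : g ∈ TE) (hcu : c s(v, u) = c g) (he : e ∈ TE)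
    (hxy : s(x, y) ∈ G.edgeSet) (hcxy : c s(x, y) = c₀) (hv : v ∉ s(x, y))
    (hsep : ¬ (edgeGraph (TE.erase e)).Reachable x y)
    (hreach : (edgeGraph (TE.erase g)).Reachable x y) (hwz : s(w, z) ∈ HE) (hv' : v ∉ s(w, z))
    (hce : c s(w, z) = c e) (hsep' : ¬ (edgeGraph (TE.erase g)).Reachable w z) :
    IsExtensionBase G c TE HE c₀ v u
      (insert s(w, z) ((insert s(x, y) (TE.erase e)).erase g)) := by
  obtain ⟨hx, hy⟩ : x ≠ v ∧ y ≠ v := by simpa [eq_comm] using hv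
  obtain ⟨hw, hz⟩ : w ≠ v ∧ z ≠ v := by simpa [eq_comm] using hv'
  obtain ⟨hA, hcol⟩ :=
    hT.exchange_twice hg he hx hy hw hz (hcxy ▸ hc₀) hsep hreach hce hsep'
  refine ⟨hu, hA, hcu ▸ hcol, fun e he => ?_, card_sdiff_le_two (a := s(w, z)) (b := s(x, y)) ?_⟩
  · simp only [mem_insert, mem_erase] at he
    rcases he with rfl | ⟨-, rfl | ⟨-, he⟩⟩
    · exact .inr (.inl hwz)
    · exact .inr (.inr ⟨hxy, hcxy⟩)
    · exact .inl he
  · exact insert_subset_insert _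
      ((erase_subset _ _).trans (insert_subset_insert _ (erase_subset _ _)))

end Extension

section Counting

variable [Fintype V] [DecidableEq V] {κ : Type*} [DecidableEq κ] {G : SimpleGraph V}
  [DecidableRel G.Adj] {c : Sym2 V → κ} {TE HE : Finset (Sym2 V)} {v : V} {c₀ : κ} {b : ℕ}

lemma not_forall_reachable_of_card_le (hc : IsProperEdgeColouring G c)
    (hT : IsRainbowTreeExcept c TE v) (hTG : ∀ e ∈ TE, e ∈ G.edgeSet)
    (hv : coloursAt G c v ⊆ TE.image c) {B : Finset (Sym2 V)}
    (hB : ∀ e ∈ B, e ∈ G.edgeSet ∧ v ∉ e) (hdeg : Fintype.card V + 2 * b ≤ 2 * G.degree v)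
    (hcover : Fintype.card V ≤ #(edgeVerts B) + 2 * b) :
    ¬ ∀ g ∈ TE, c g ∈ coloursAt G c v →
      ∀ x y, s(x, y) ∈ B → (edgeGraph (TE.erase g)).Reachable x y := by
  intro h
  have hcount := card_edgeVerts_le_of_forall_reachable hT.toIsSpanningTreeExcept
    (fun e he => ⟨(hB e he).2, G.not_isDiag_of_mem_edgeSet (hB e he).1⟩) h
  have hgood := card_le_card_filter_of_subset_image hv
  rw [hc.card_coloursAt] at hgood
  have hsplit := card_filter_add_card_filter_not (s := TE) (c · ∈ coloursAt G c v)
  have hcard : 0 < Fintype.card V := Fintype.card_pos_iff.mpr ⟨v⟩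
  obtain ⟨u, hu⟩ := (G.degree_pos_iff_exists_adj v).mp (by omega)
  have hTcard := hT.card_add_two (fun e he => G.not_isDiag_of_mem_edgeSet (hTG e he)) hu.ne'
  omega

lemma exists_isExtensionBase_of_coloursAt_subset (hc : IsProperEdgeColouring G c)
    (hT : IsRainbowTreeExcept c TE v) (hTG : ∀ e ∈ TE, e ∈ G.edgeSet) (hc₀ : c₀ ∉ TE.image c)
    (hb : b ≤ #(G.edgeFinset.filter (c · = c₀))) (hHG : ∀ e ∈ HE, e ∈ G.edgeSet)
    (hHv : ∀ e ∈ HE, v ∉ e) (hdeg : Fintype.card V + 2 * b ≤ 2 * G.degree v)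
    (hcover : ∀ S ⊆ TE.image c, #S = b →
      Fintype.card V ≤ #(edgeVerts (HE.filter (c · ∈ S))) + 2 * b)
    (hv : coloursAt G c v ⊆ TE.image c) :
    ∃ u A, IsExtensionBase G c TE HE c₀ v u A := by
  set F := G.edgeFinset.filter (c · = c₀)
  have hF : ∀ e ∈ F, e ∈ G.edgeSet ∧ c e = c₀ ∧ v ∉ e := by
    intro e he
    obtain ⟨heG, hce⟩ := mem_filter.mp he
    refine ⟨mem_edgeFinset.mp heG, hce, fun hve => ?_⟩
    obtain ⟨u, rfl⟩ := Sym2.mem_iff_exists.mp hve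
    exact hc₀ (hce ▸ hv (mem_image_of_mem _ (G.mem_neighborFinset v u |>.mpr
      (mem_edgeFinset.mp heG))))
  have hgood {g : Sym2 V} (hg : c g ∈ coloursAt G c v) : ∃ u, G.Adj v u ∧ c s(v, u) = c g := by
    simpa [coloursAt] using hg
  by_cases h₁ : ∃ g ∈ TE, c g ∈ coloursAt G c v ∧
      ∃ x y, s(x, y) ∈ F ∧ ¬ (edgeGraph (TE.erase g)).Reachable x y
  · obtain ⟨g, hg, hgv, x, y, hxy, hsep⟩ := h₁
    obtain ⟨u, hu, hcu⟩ := hgood hgv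
    exact ⟨u, _, isExtensionBase_exchange hT hc₀ hu hg hcu (hF _ hxy).1 (hF _ hxy).2.1
      (hF _ hxy).2.2 hsep⟩
  push Not at h₁
  obtain ⟨S, hST, hS, hSsep⟩ := exists_colours_separating hc hT hF hb
  by_cases h₂ : ∃ g ∈ TE, c g ∈ coloursAt G c v ∧
      ∃ w z, s(w, z) ∈ HE.filter (c · ∈ S) ∧ ¬ (edgeGraph (TE.erase g)).Reachable w z
  · obtain ⟨g, hg, hgv, w, z, hwz, hsep'⟩ := h₂
    obtain ⟨hwz, hcS⟩ := mem_filter.mp hwz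
    obtain ⟨u, hu, hcu⟩ := hgood hgv
    obtain ⟨e, he, hce, x, y, hxy, hsep⟩ := hSsep _ hcS
    exact ⟨u, _, isExtensionBase_exchange_twice hT hc₀ hu hg hcu he (hF _ hxy).1 (hF _ hxy).2.1
      (hF _ hxy).2.2 hsep (h₁ g hg hgv x y hxy) hwz (hHv _ hwz) hce.symm hsep'⟩
  push Not at h₂
  exact absurd h₂ (not_forall_reachable_of_card_le hc hT hTG hv
    (fun e he => ⟨hHG e (mem_filter.mp he).1, hHv e (mem_filter.mp he).1⟩) hdeg (hcover S hST hS))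

lemma exists_isExtensionBase (hc : IsProperEdgeColouring G c)
    (hT : IsRainbowTreeExcept c TE v) (hTG : ∀ e ∈ TE, e ∈ G.edgeSet) (hc₀ : c₀ ∉ TE.image c)
    (hb : b ≤ #(G.edgeFinset.filter (c · = c₀))) (hHG : ∀ e ∈ HE, e ∈ G.edgeSet)
    (hHv : ∀ e ∈ HE, v ∉ e) (hdeg : Fintype.card V + 2 * b ≤ 2 * G.degree v)
    (hcover : ∀ S ⊆ TE.image c, #S = b →
      Fintype.card V ≤ #(edgeVerts (HE.filter (c · ∈ S))) + 2 * b) :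
    ∃ u A, IsExtensionBase G c TE HE c₀ v u A := by
  by_cases hv : coloursAt G c v ⊆ TE.image c
  · exact exists_isExtensionBase_of_coloursAt_subset hc hT hTG hc₀ hb hHG hHv hdeg hcover hv
  obtain ⟨k, hk, hkT⟩ := not_subset.mp hv
  obtain ⟨u, hu, rfl⟩ := mem_image.mp hk
  exact ⟨u, TE, (G.mem_neighborFinset v u).mp hu, hT, hkT, fun e he => .inl he, by simp⟩

end Counting

/-- Extending a rainbow tree by one vertex. In a properly edge-coloured
graph `G` on `n` vertices: given a rainbow tree `T` (edges `TE`, vertex set `TV`) with `n-1`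
vertices, the vertex `v` outside `T` of degree `≥ n/2 + b`, a colour `c₀` not on `T` with at
least `b` edges, and a subgraph `H` (edges `HE`) on `V(T)`, edge-disjoint from `T`, in which
every set of `b` colours of `C(T)` covers at least `n - 2b` vertices, there is a rainbow tree
`T'` in `T ∪ H ∪ E(c₀) ∪ E(v)` spanning `V(T) ∪ {v}`, with at most `3` edges outside `T` and
with `v` of degree `1`. -/
theorem statement_19 :
    ∀ n b : ℕ, 1 ≤ b →
    ∀ (G : SimpleGraph (Fin n)) [inst : DecidableRel G.Adj] (c : Sym2 (Fin n) → ℕ),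
      (∀ e ∈ G.edgeFinset, ∀ f ∈ G.edgeFinset, e ≠ f →
        (∃ u, u ∈ e ∧ u ∈ f) → c e ≠ c f) →
      ∀ (TE HE : Finset (Sym2 (Fin n))) (TV : Finset (Fin n)) (v : Fin n) (c₀ : ℕ),
        (∀ e ∈ TE, e ∈ G.edgeFinset) →
        (∀ e ∈ TE, ∀ u, u ∈ e → u ∈ TV) →
        (∀ u ∈ TV, ∀ w ∈ TV,
          (SimpleGraph.fromEdgeSet (↑TE : Set (Sym2 (Fin n)))).Reachable u w) →
        (SimpleGraph.fromEdgeSet (↑TE : Set (Sym2 (Fin n)))).IsAcyclic →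
        Set.InjOn c ↑TE →
        TV.card = n - 1 →
        v ∉ TV →
        (n : ℝ) / 2 + b ≤ (G.degree v : ℝ) →
        c₀ ∉ TE.image c →
        b ≤ (G.edgeFinset.filter (fun e => c e = c₀)).card →
        (∀ e ∈ HE, e ∈ G.edgeFinset) →
        (∀ e ∈ HE, ∀ u, u ∈ e → u ∈ TV) →
        Disjoint HE TE →
        (∀ S : Finset ℕ, S ⊆ TE.image c → S.card = b →
          (n : ℝ) - 2 * b ≤
            (((Finset.univ : Finset (Fin n)).filter
              (fun u => ∃ e ∈ HE, u ∈ e ∧ c e ∈ S)).card : ℝ)) →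
        ∃ TE' : Finset (Sym2 (Fin n)),
          (∀ e ∈ TE', e ∈ TE ∨ e ∈ HE ∨ (e ∈ G.edgeFinset ∧ c e = c₀) ∨
            (e ∈ G.edgeFinset ∧ v ∈ e)) ∧
          (∀ e ∈ TE', ∀ u, u ∈ e → u ∈ insert v TV) ∧
          (∀ u ∈ insert v TV, ∀ w ∈ insert v TV,
            (SimpleGraph.fromEdgeSet (↑TE' : Set (Sym2 (Fin n)))).Reachable u w) ∧
          (SimpleGraph.fromEdgeSet (↑TE' : Set (Sym2 (Fin n)))).IsAcyclic ∧
          Set.InjOn c ↑TE' ∧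
          (TE' \ TE).card ≤ 3 ∧
          (TE'.filter (fun e => v ∈ e)).card = 1 := by
  intro n b _ G _ c hproper TE HE TV v c₀ hTG hTV hTconn hTacyc hTinj hTVcard hvTV hdeg hc₀
    hb hHG hHV _ hcover
  have hTV_eq : TV = univ.erase v := eq_of_subset_of_card_le
    (fun x hx => mem_erase.mpr ⟨by rintro rfl; exact hvTV hx, mem_univ x⟩) (by simp [hTVcard])
  have hTv : ∀ e ∈ TE, v ∉ e := fun e he hv => hvTV (hTV e he v hv)
  have hT : IsRainbowTreeExcept c TE v :=
    ⟨⟨hTv, fun x y hx hy => hTconn x (by simp [hTV_eq, hx]) y (by simp [hTV_eq, hy]), hTacyc⟩,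
      hTinj⟩
  have hdeg' : Fintype.card (Fin n) + 2 * b ≤ 2 * G.degree v := by
    rw [Fintype.card_fin]; exact_mod_cast (by linarith : (n : ℝ) + 2 * b ≤ 2 * G.degree v)
  have hcover' (S) (hST : S ⊆ TE.image c) (hS : #S = b) :
      Fintype.card (Fin n) ≤ #(edgeVerts (HE.filter (c · ∈ S))) + 2 * b := by
    have h := hcover S hST hS
    rw [filter_exists_mem_and_eq_edgeVerts] at h
    rw [Fintype.card_fin]
    exact_mod_cast (by linarith : (n : ℝ) ≤ #(edgeVerts (HE.filter (c · ∈ S))) + 2 * b)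
  obtain ⟨u, A, hA⟩ := exists_isExtensionBase
    (fun e he f hf => hproper e (mem_edgeFinset.mpr he) f (mem_edgeFinset.mpr hf)) hT
    (fun e he => mem_edgeFinset.mp (hTG e he)) hc₀ hb (fun e he => mem_edgeFinset.mp (hHG e he))
    (fun e he hv => hvTV (hHV e he v hv)) hdeg' hcover'
  obtain ⟨hsrc, htree, hinj, hcard, hv⟩ := hA.insert hTv
  exact ⟨insert s(v, u) A, fun e he => by simpa using hsrc e he, by simp [hTV_eq],
    fun x _ y _ => htree.connected.preconnected x y, htree.isAcyclic, hinj, hcard, hv⟩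
end
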